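/- arXiv:2306.16420 — 4 statements merged into one kernel-verified Lean document; each statement's English description precedes it below -/
import Mathlib

section
/- Let 𝔖_A, 𝔖_B be spaces of states admitting descriptions in terms of pure states, with admissible effect spaces ℰ_A, ℰ_B. Then the set of pure (completely meet-irreducible) elements of the minimal tensor product 𝔖_A⊗̃𝔖_B equals {α⊗̃β : α ∈ 𝔖_A^pure, β ∈ 𝔖_B^pure}, and also equals the set of maximal elements of 𝔖_A⊗̃𝔖_B. -/
/-! ## The boolean domain 𝔅 -/

/-- The boolean domain `𝔅 = {⊥, Y, N}`. -/
inductive BD : Type where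
  | bot : BD
  | Y : BD
  | N : BD
  deriving DecidableEq

namespace BD

instance : PartialOrder BD where
  le u v := u = bot ∨ u = v
  le_refl u := Or.inr rfl
  le_trans u v w huv hvw := by
    rcases huv with h | h
    · exact Or.inl h
    · subst h; exact hvw
  le_antisymm u v huv hvu := by
    rcases huv with h | h
    · rcases hvu with h' | h'
      · rw [h, h']
      · exact h'.symm
    · exact h

instance : OrderBot BD where
  bot := bot
  bot_le u := Or.inl rfl

instance : SemilatticeInf BD where
  inf u v := if u = v then u else bot
  inf_le_left u v := by
    show (if u = v then u else bot) = bot ∨ (if u = v then u else bot) = u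
    by_cases h : u = v
    · simp [h]
    · simp [h]
  inf_le_right u v := by
    show (if u = v then u else bot) = bot ∨ (if u = v then u else bot) = v
    by_cases h : u = v
    · simp [h]
    · simp [h]
  le_inf u v w huv huw := by
    show u = bot ∨ u = (if v = w then v else bot)
    rcases huv with h | h
    · exact Or.inl h
    · rcases huw with h' | h'
      · exact Or.inl h'
      · right
        rw [← h, ← h']
        simp

/-- The involution of `𝔅`, fixing `⊥` and exchanging `Y` and `N`. -/
def inv : BD → BD
  | bot => bot
  | Y => N
  | N => Y

/-- The commutative monoid product `•` on `𝔅`. -/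
def prod : BD → BD → BD
  | N, _ => N
  | _, N => N
  | Y, Y => Y
  | _, _ => bot

end BD

/-! ## Spaces of states -/

/-- A preorder is down-complete if every nonempty subset has a greatest lower bound. -/
def DownComplete (S : Type*) [Preorder S] : Prop :=
  ∀ T : Set S, T.Nonempty → ∃ g : S, IsGLB T g

/-- A state is pure (completely meet-irreducible) if it belongs to every nonempty
subset of which it is the greatest lower bound. -/
def PureState {S : Type*} [Preorder S] (σ : S) : Prop :=
  ∀ T : Set S, T.Nonempty → IsGLB T σ → σ ∈ T

/-- `S` admits a description in terms of pure states: the pure states are exactly the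
maximal elements, and every state is the infimum of the (nonempty) set of pure states
above it. -/
def PureDescription (S : Type*) [Preorder S] : Prop :=
  {σ : S | PureState σ} = {σ : S | IsMax σ} ∧
    ∀ σ : S, ({α : S | PureState α ∧ σ ≤ α}).Nonempty ∧
      IsGLB {α : S | PureState α ∧ σ ≤ α} σ

/-- `S` is a simplex: every state is the infimum of exactly one nonempty set of
pure states. -/
def Simplex (S : Type*) [Preorder S] : Prop :=
  ∀ σ : S, ∃! U : Set S, U.Nonempty ∧ (∀ α ∈ U, PureState α) ∧ IsGLB U σ

/-- Distributivity of a meet-semilattice in Grätzer's sense. -/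
def GDistrib (S : Type*) [SemilatticeInf S] : Prop :=
  ∀ σ σ₁ σ₂ : S, σ ≠ σ₁ → σ ≠ σ₂ → σ₁ ⊓ σ₂ ≤ σ →
    ∃ σ₁' σ₂' : S, σ₁ ≤ σ₁' ∧ σ₂ ≤ σ₂' ∧ σ = σ₁' ⊓ σ₂'

/-- Two elements admit a common upper bound. -/
def UpperBounded {S : Type*} [Preorder S] (σ σ' : S) : Prop :=
  ∃ η : S, σ ≤ η ∧ σ' ≤ η

/-- The relation `σ ⋈̌ σ'`. -/
def Bowtie {S : Type*} [Preorder S] (σ σ' : S) : Prop :=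
  ¬ UpperBounded σ σ' ∧
    (∀ σ'' : S, σ'' < σ' → UpperBounded σ σ'') ∧
    (∀ σ'' : S, σ'' < σ → UpperBounded σ' σ'')

/-- `star` is an orthocomplementation of the space of states `S`. -/
structure IsOrtho {S : Type*} [PartialOrder S] [OrderBot S] (star : S → S) : Prop where
  ne_bot : ∀ σ : S, σ ≠ ⊥ → star σ ≠ ⊥
  invol : ∀ σ : S, σ ≠ ⊥ → star (star σ) = σ
  anti : ∀ σ τ : S, σ ≠ ⊥ → τ ≠ ⊥ → σ ≤ τ → star τ ≤ star σ
  bowtie : ∀ σ : S, σ ≠ ⊥ → Bowtie σ (star σ)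

/-! ## Effects -/

/-- A map `a : S → 𝔅` preserves infima of nonempty subsets. -/
def PreservesInf {S : Type*} [Preorder S] (a : S → BD) : Prop :=
  ∀ T : Set S, T.Nonempty → ∀ g : S, IsGLB T g → IsGLB (a '' T) (a g)

/-- An admissible effect space for a space of states `S`. -/
structure IsAdmissible {S : Type*} [SemilatticeInf S] [OrderBot S]
    (E : Set (S → BD)) : Prop where
  preserves : ∀ a ∈ E, PreservesInf a
  infClosed : ∀ F : Set (S → BD), F ⊆ E → F.Nonempty →
    ∀ f : S → BD, (∀ σ : S, IsGLB ((fun a => a σ) '' F) (f σ)) → f ∈ E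
  invClosed : ∀ a ∈ E, (fun σ => BD.inv (a σ)) ∈ E
  constY : (fun _ : S => BD.Y) ∈ E
  constBot : (fun _ : S => BD.bot) ∈ E
  separating : ∀ σ : S, σ ≠ ⊥ → ∃ σ' : S, σ' ≠ ⊥ ∧ ∃ a ∈ E,
    (∀ η : S, a η = BD.Y ↔ σ ≤ η) ∧ (∀ η : S, a η = BD.N ↔ σ' ≤ η)

/-- The type of effects belonging to an effect space `E`. -/
abbrev Eff {S : Type*} (E : Set (S → BD)) : Type _ := {a : S → BD // a ∈ E}

/-- The dual space `ℰ*` of an effect space. -/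
def EStar {S : Type*} [Preorder S] (E : Set (S → BD)) : Set (Eff E → BD) :=
  {ψ | (∀ F : Set (Eff E), F.Nonempty → ∀ f : Eff E,
      (∀ σ : S, IsGLB ((fun a : Eff E => a.1 σ) '' F) (f.1 σ)) → IsGLB (ψ '' F) (ψ f)) ∧
    (∀ a abar : Eff E, (∀ σ : S, abar.1 σ = BD.inv (a.1 σ)) → ψ abar = BD.inv (ψ a)) ∧
    (∀ y : Eff E, (∀ σ : S, y.1 σ = BD.Y) → ψ y = BD.Y)}

/-- A completely meet-irreducible (pure) element of an effect space `E`,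
with respect to the pointwise order. -/
def PureEffect {S : Type*} [Preorder S] (E : Set (S → BD)) (l : S → BD) : Prop :=
  l ∈ E ∧ ∀ F : Set (S → BD), F ⊆ E → F.Nonempty →
    (∀ σ : S, IsGLB ((fun a => a σ) '' F) (l σ)) → l ∈ F

/-- A maximal element of an effect space `E`, with respect to the pointwise order. -/
def MaxEffect {S : Type*} [Preorder S] (E : Set (S → BD)) (l : S → BD) : Prop :=
  l ∈ E ∧ ∀ l' ∈ E, l ≤ l' → l = l'

open Classical in
/-- The effect `𝔩_(σ,σ')`: value `Y` on the upper set of `σ`, `N` on the upper set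
of `σ'`, and `⊥` elsewhere. -/
noncomputable def ellEff {S : Type*} [Preorder S] (σ σ' : S) : S → BD :=
  fun η => if σ ≤ η then BD.Y else if σ' ≤ η then BD.N else BD.bot

/-- The reduced effect space `Ē_𝔖` of an orthocomplemented space of states. -/
def ReducedEffects {S : Type*} [SemilatticeInf S] [OrderBot S] (star : S → S) :
    Set (S → BD) :=
  {a | PreservesInf a ∧
    ∀ σ σ' : S, a ⁻¹' {BD.Y} = {η : S | σ ≤ η} → a ⁻¹' {BD.N} = {η : S | σ' ≤ η} →
      star σ ≤ σ'}

/-! ## Tensor products -/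

/-- The pure tensor `σ ⊗̃ τ`, as a map on pairs of effects. -/
def pureT {SA SB : Type*} (EA : Set (SA → BD)) (EB : Set (SB → BD))
    (σ : SA) (τ : SB) : Eff EA → Eff EB → BD :=
  fun a b => BD.prod (a.1 σ) (b.1 τ)

/-- The minimal tensor product: pointwise infima of nonempty families of pure tensors. -/
def MinTensor {SA SB : Type*} (EA : Set (SA → BD)) (EB : Set (SB → BD)) :
    Set (Eff EA → Eff EB → BD) :=
  {Φ | ∃ U : Set (SA × SB), U.Nonempty ∧
    ∀ (a : Eff EA) (b : Eff EB),
      IsGLB ((fun p : SA × SB => pureT EA EB p.1 p.2 a b) '' U) (Φ a b)}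

/-- The maximal tensor product `𝔖_A ⊗̌ 𝔖_B`. -/
def MaxTensor {SA SB : Type*} (EA : Set (SA → BD)) (EB : Set (SB → BD)) :
    Set (Eff EA → Eff EB → BD) :=
  {Φ |
    (∀ F : Set (Eff EA), F.Nonempty → ∀ f : Eff EA,
      (∀ σ : SA, IsGLB ((fun a : Eff EA => a.1 σ) '' F) (f.1 σ)) →
      ∀ b : Eff EB, IsGLB ((fun a : Eff EA => Φ a b) '' F) (Φ f b)) ∧
    (∀ G : Set (Eff EB), G.Nonempty → ∀ g : Eff EB,
      (∀ τ : SB, IsGLB ((fun b : Eff EB => b.1 τ) '' G) (g.1 τ)) →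
      ∀ a : Eff EA, IsGLB ((fun b : Eff EB => Φ a b) '' G) (Φ a g)) ∧
    (∀ a abar : Eff EA, ∀ yB : Eff EB,
      (∀ σ : SA, abar.1 σ = BD.inv (a.1 σ)) → (∀ τ : SB, yB.1 τ = BD.Y) →
      Φ abar yB = BD.inv (Φ a yB)) ∧
    (∀ b bbar : Eff EB, ∀ yA : Eff EA,
      (∀ τ : SB, bbar.1 τ = BD.inv (b.1 τ)) → (∀ σ : SA, yA.1 σ = BD.Y) →
      Φ yA bbar = BD.inv (Φ yA b)) ∧
    (∀ (yA : Eff EA) (yB : Eff EB),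
      (∀ σ : SA, yA.1 σ = BD.Y) → (∀ τ : SB, yB.1 τ = BD.Y) → Φ yA yB = BD.Y)}

/-- The regular tensor product `𝔖_A ⊗̂ 𝔖_B`. -/
def RegTensor {SA SB : Type*} (EA : Set (SA → BD)) (EB : Set (SB → BD)) :
    Set (Eff EA → Eff EB → BD) :=
  {Φ | Φ ∈ MaxTensor EA EB ∧
    (∀ (a : Eff EA) (nB : Eff EB), (∀ τ : SB, nB.1 τ = BD.N) → Φ a nB = BD.N) ∧
    (∀ (nA : Eff EA) (b : Eff EB), (∀ σ : SA, nA.1 σ = BD.N) → Φ nA b = BD.N) ∧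
    (∀ (a : Eff EA) (yB : Eff EB), (∀ τ : SB, yB.1 τ = BD.Y) → Φ a yB = BD.Y →
      ∀ (b bbar : Eff EB), (∀ τ : SB, bbar.1 τ = BD.inv (b.1 τ)) →
        (Φ a b = BD.Y ∧ Φ a bbar = BD.N) ∨ (Φ a b = BD.N ∧ Φ a bbar = BD.Y) ∨
          (Φ a b = BD.bot ∧ Φ a bbar = BD.bot)) ∧
    (∀ (b : Eff EB) (yA : Eff EA), (∀ σ : SA, yA.1 σ = BD.Y) → Φ yA b = BD.Y →
      ∀ (a abar : Eff EA), (∀ σ : SA, abar.1 σ = BD.inv (a.1 σ)) →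
        (Φ a b = BD.Y ∧ Φ abar b = BD.N) ∨ (Φ a b = BD.N ∧ Φ abar b = BD.Y) ∨
          (Φ a b = BD.bot ∧ Φ abar b = BD.bot)) ∧
    (∀ (a : Eff EA) (yB : Eff EB), (∀ τ : SB, yB.1 τ = BD.Y) → Φ a yB = BD.bot →
      ∀ (b b' : Eff EB), (∀ τ : SB, b.1 τ ⊓ b'.1 τ = BD.bot) →
        (Φ a b = BD.bot ∧ Φ a b' = BD.N) ∨ (Φ a b = BD.N ∧ Φ a b' = BD.bot) ∨
          (Φ a b = BD.bot ∧ Φ a b' = BD.bot)) ∧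
    (∀ (b : Eff EB) (yA : Eff EA), (∀ σ : SA, yA.1 σ = BD.Y) → Φ yA b = BD.bot →
      ∀ (a a' : Eff EA), (∀ σ : SA, a.1 σ ⊓ a'.1 σ = BD.bot) →
        (Φ a b = BD.bot ∧ Φ a' b = BD.N) ∨ (Φ a b = BD.N ∧ Φ a' b = BD.bot) ∨
          (Φ a b = BD.bot ∧ Φ a' b = BD.bot))}

/-- A completely meet-irreducible (pure) element of the minimal tensor product. -/
def PureInMin {SA SB : Type*} (EA : Set (SA → BD)) (EB : Set (SB → BD))
    (Φ : Eff EA → Eff EB → BD) : Prop :=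
  Φ ∈ MinTensor EA EB ∧
    ∀ F : Set (Eff EA → Eff EB → BD), F ⊆ MinTensor EA EB → F.Nonempty →
      (∀ (a : Eff EA) (b : Eff EB),
        IsGLB ((fun Ψ : Eff EA → Eff EB → BD => Ψ a b) '' F) (Φ a b)) → Φ ∈ F

/-- A bi-filter of `𝔖_A × 𝔖_B`. -/
def BiFilter {SA SB : Type*} [SemilatticeInf SA] [SemilatticeInf SB]
    (R : Set (SA × SB)) : Prop :=
  R.Nonempty ∧
    (∀ p q : SA × SB, p.1 ≤ q.1 → p.2 ≤ q.2 → p ∈ R → q ∈ R) ∧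
    (∀ (σ₁ σ₂ : SA) (τ : SB), (σ₁, τ) ∈ R → (σ₂, τ) ∈ R → (σ₁ ⊓ σ₂, τ) ∈ R) ∧
    (∀ (σ : SA) (τ₁ τ₂ : SB), (σ, τ₁) ∈ R → (σ, τ₂) ∈ R → (σ, τ₁ ⊓ τ₂) ∈ R)

/-- The bi-filter `𝔉̃` determined by a finite nonempty family of pure tensors. -/
def Ftilde {SA SB : Type*} (EA : Set (SA → BD)) (EB : Set (SB → BD))
    {ι : Type*} [Fintype ι] [Nonempty ι] (σ : ι → SA) (τ : ι → SB) :
    Set (SA × SB) :=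
  {p | ∀ (a : Eff EA) (b : Eff EB),
    Finset.univ.inf' Finset.univ_nonempty
      (fun i => pureT EA EB (σ i) (τ i) a b) ≤ pureT EA EB p.1 p.2 a b}

/-! ### Auxiliary lemmas for Statement 14 -/

namespace MinTensorAux

lemma bd_le_iff (u v : BD) : u ≤ v ↔ (u = BD.bot ∨ u = v) := Iff.rfl

lemma Y_le {v : BD} (h : BD.Y ≤ v) : v = BD.Y := by
  rcases (bd_le_iff _ _).mp h with h | h
  · exact absurd h (by decide)
  · exact h.symm

lemma N_le {v : BD} (h : BD.N ≤ v) : v = BD.N := by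
  rcases (bd_le_iff _ _).mp h with h | h
  · exact absurd h (by decide)
  · exact h.symm

lemma prod_Y_left (u : BD) : BD.prod BD.Y u = u := by cases u <;> rfl

lemma prod_Y_right (u : BD) : BD.prod u BD.Y = u := by cases u <;> rfl

lemma prod_N_left (u : BD) : BD.prod BD.N u = BD.N := by cases u <;> rfl

lemma prod_N_right (u : BD) : BD.prod u BD.N = BD.N := by cases u <;> rfl

lemma prod_eq_Y {u v : BD} (h : BD.prod u v = BD.Y) : u = BD.Y ∧ v = BD.Y := by
  cases u <;> cases v <;> first | exact ⟨rfl, rfl⟩ | exact absurd h (by decide)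

lemma prod_eq_N {u v : BD} (h : BD.prod u v = BD.N) : u = BD.N ∨ v = BD.N := by
  cases u <;> cases v <;> first | exact Or.inl rfl | exact Or.inr rfl | exact absurd h (by decide)

lemma isGLB_const {S : Set BD} {c : BD} (hne : S.Nonempty) (h : ∀ x ∈ S, x = c) :
    IsGLB S c := by
  constructor
  · intro x hx
    rw [h x hx]
  · intro b hb
    obtain ⟨x, hx⟩ := hne
    exact (h x hx) ▸ hb hx

lemma glb_Y {S : Set BD} (h : IsGLB S BD.Y) : ∀ x ∈ S, x = BD.Y :=
  fun _ hx => Y_le (h.1 hx)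

lemma glb_N {S : Set BD} (h : IsGLB S BD.N) : ∀ x ∈ S, x = BD.N :=
  fun _ hx => N_le (h.1 hx)

/-- The product `•` on `𝔅` preserves greatest lower bounds of nonempty sets in
each variable. -/
lemma isGLB_prod_image {A B : Type*} (f : A → BD) (g : B → BD)
    {S : Set A} {T : Set B} (hS : S.Nonempty) (hT : T.Nonempty)
    {x y : BD} (hx : IsGLB (f '' S) x) (hy : IsGLB (g '' T) y) :
    IsGLB ((fun p : A × B => BD.prod (f p.1) (g p.2)) '' (S ×ˢ T)) (BD.prod x y) := by
  obtain ⟨s₀, hs₀⟩ := hS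
  obtain ⟨t₀, ht₀⟩ := hT
  have hPne : ((fun p : A × B => BD.prod (f p.1) (g p.2)) '' (S ×ˢ T)).Nonempty :=
    ⟨_, ⟨(s₀, t₀), ⟨hs₀, ht₀⟩, rfl⟩⟩
  have hmemP : ∀ s ∈ S, ∀ t ∈ T,
      BD.prod (f s) (g t) ∈ (fun p : A × B => BD.prod (f p.1) (g p.2)) '' (S ×ˢ T) :=
    fun s hs t ht => ⟨(s, t), ⟨hs, ht⟩, rfl⟩
  cases x with
  | N =>
    apply isGLB_const hPne
    rintro z ⟨p, hp, rfl⟩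
    show BD.prod (f p.1) (g p.2) = _
    have : f p.1 = BD.N := glb_N hx _ ⟨p.1, hp.1, rfl⟩
    rw [this, prod_N_left, prod_N_left]
  | Y =>
    cases y with
    | N =>
      rw [prod_N_right]
      apply isGLB_const hPne
      rintro z ⟨p, hp, rfl⟩
      show BD.prod (f p.1) (g p.2) = _
      have : g p.2 = BD.N := glb_N hy _ ⟨p.2, hp.2, rfl⟩
      rw [this, prod_N_right]
    | Y =>
      apply isGLB_const hPne
      rintro z ⟨p, hp, rfl⟩
      show BD.prod (f p.1) (g p.2) = _
      rw [glb_Y hx _ ⟨p.1, hp.1, rfl⟩, glb_Y hy _ ⟨p.2, hp.2, rfl⟩]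
    | bot =>
      show IsGLB _ BD.bot
      constructor
      · intro z _
        exact bot_le
      · intro h hb
        apply hy.2
        rintro z ⟨t, ht, rfl⟩
        have := hb (hmemP s₀ hs₀ t ht)
        rwa [glb_Y hx _ ⟨s₀, hs₀, rfl⟩, prod_Y_left] at this
  | bot =>
    cases y with
    | N =>
      rw [prod_N_right]
      apply isGLB_const hPne
      rintro z ⟨p, hp, rfl⟩
      show BD.prod (f p.1) (g p.2) = _
      have : g p.2 = BD.N := glb_N hy _ ⟨p.2, hp.2, rfl⟩
      rw [this, prod_N_right]
    | Y =>
      show IsGLB _ BD.bot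
      constructor
      · intro z _
        exact bot_le
      · intro h hb
        apply hx.2
        rintro z ⟨s, hs, rfl⟩
        have := hb (hmemP s hs t₀ ht₀)
        rwa [glb_Y hy _ ⟨t₀, ht₀, rfl⟩, prod_Y_right] at this
    | bot =>
      show IsGLB _ BD.bot
      constructor
      · intro z _
        exact bot_le
      · intro h hb
        cases h with
        | bot => exact le_refl _
        | Y =>
          apply hx.2
          rintro z ⟨s, hs, rfl⟩
          have := Y_le (hb (hmemP s hs t₀ ht₀))
          rw [(prod_eq_Y this).1]
        | N =>
          by_cases hall : ∀ s ∈ S, f s = BD.N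
          · apply hx.2
            rintro z ⟨s, hs, rfl⟩
            rw [hall s hs]
          · push_neg at hall
            obtain ⟨s₁, hs₁, hs₁N⟩ := hall
            apply hy.2
            rintro z ⟨t, ht, rfl⟩
            have := N_le (hb (hmemP s₁ hs₁ t ht))
            rcases prod_eq_N this with h | h
            · exact absurd h hs₁N
            · rw [h]

/-- A greatest lower bound of greatest lower bounds is the greatest lower bound
of the union. -/
lemma isGLB_biUnion {ι α : Type*} [Preorder α] {I : Set ι} {S : ι → Set α}
    {g : ι → α} {x : α} (hI : ∀ i ∈ I, IsGLB (S i) (g i)) (hx : IsGLB (g '' I) x) :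
    IsGLB (⋃ i ∈ I, S i) x := by
  constructor
  · intro z hz
    simp only [Set.mem_iUnion] at hz
    obtain ⟨i, hi, hzi⟩ := hz
    exact le_trans (hx.1 ⟨i, hi, rfl⟩) ((hI i hi).1 hzi)
  · intro h hb
    apply hx.2
    rintro z ⟨i, hi, rfl⟩
    exact (hI i hi).2 (fun w hw => hb (Set.mem_biUnion hi hw))

end MinTensorAux

/-- the pure elements of the minimal tensor product are exactly the
pure tensors of pure states, and they are exactly the maximal elements. -/
theorem min_tensor_pure_elements {SA SB : Type*}
    [SemilatticeInf SA] [OrderBot SA] [SemilatticeInf SB] [OrderBot SB]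
    (hdcA : DownComplete SA) (hdcB : DownComplete SB)
    (hpdA : PureDescription SA) (hpdB : PureDescription SB)
    (EA : Set (SA → BD)) (EB : Set (SB → BD))
    (hEA : IsAdmissible EA) (hEB : IsAdmissible EB) :
    ({Φ : Eff EA → Eff EB → BD | PureInMin EA EB Φ} =
        {Φ : Eff EA → Eff EB → BD | ∃ (α : SA) (β : SB),
          PureState α ∧ PureState β ∧ Φ = pureT EA EB α β}) ∧
    ({Φ : Eff EA → Eff EB → BD | PureInMin EA EB Φ} =
        {Φ : Eff EA → Eff EB → BD | Φ ∈ MinTensor EA EB ∧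
          ∀ Ψ ∈ MinTensor EA EB, Φ ≤ Ψ → Φ = Ψ}) := by
  classical
  open MinTensorAux in
  -- every pure tensor belongs to the minimal tensor product
  have haveA : ∀ (σ : SA) (τ : SB), pureT EA EB σ τ ∈ MinTensor EA EB := by
    intro σ τ
    refine ⟨{(σ, τ)}, Set.singleton_nonempty _, fun a b => ?_⟩
    rw [Set.image_singleton]
    exact isGLB_singleton
  -- maximal elements are pure
  have haveB : ∀ Φ : Eff EA → Eff EB → BD, Φ ∈ MinTensor EA EB →
      (∀ Ψ ∈ MinTensor EA EB, Φ ≤ Ψ → Φ = Ψ) → PureInMin EA EB Φ := by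
    intro Φ hΦ hmax
    refine ⟨hΦ, fun F hF hFne hglb => ?_⟩
    obtain ⟨Ψ, hΨF⟩ := hFne
    have hle : Φ ≤ Ψ := fun a b => (hglb a b).1 ⟨Ψ, hΨF, rfl⟩
    have : Φ = Ψ := hmax Ψ (hF hΨF) hle
    rw [this]
    exact hΨF
  -- pure elements are pure tensors of pure states
  have haveC : ∀ Φ : Eff EA → Eff EB → BD, PureInMin EA EB Φ →
      ∃ (α : SA) (β : SB), PureState α ∧ PureState β ∧ Φ = pureT EA EB α β := by
    intro Φ hΦ
    obtain ⟨⟨U, hUne, hU⟩, hpure⟩ := hΦ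
    set PA : SA → Set SA := fun σ => {α : SA | PureState α ∧ σ ≤ α} with hPA
    set PB : SB → Set SB := fun τ => {β : SB | PureState β ∧ τ ≤ β} with hPB
    set V : Set (SA × SB) := ⋃ p ∈ U, (PA p.1) ×ˢ (PB p.2) with hV
    set F : Set (Eff EA → Eff EB → BD) :=
      (fun p : SA × SB => pureT EA EB p.1 p.2) '' V with hF
    have hFsub : F ⊆ MinTensor EA EB := by
      rintro _ ⟨p, _, rfl⟩
      exact haveA p.1 p.2
    have hFne : F.Nonempty := by
      obtain ⟨p, hp⟩ := hUne
      obtain ⟨α, hα⟩ := (hpdA.2 p.1).1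
      obtain ⟨β, hβ⟩ := (hpdB.2 p.2).1
      exact ⟨_, ⟨(α, β), Set.mem_biUnion hp ⟨hα, hβ⟩, rfl⟩⟩
    have hFglb : ∀ (a : Eff EA) (b : Eff EB),
        IsGLB ((fun Ψ : Eff EA → Eff EB → BD => Ψ a b) '' F) (Φ a b) := by
      intro a b
      have himg : (fun Ψ : Eff EA → Eff EB → BD => Ψ a b) '' F =
          ⋃ p ∈ U, ((fun q : SA × SB => pureT EA EB q.1 q.2 a b) ''
            ((PA p.1) ×ˢ (PB p.2))) := by
        rw [hF, Set.image_image, hV]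
        ext z
        constructor
        · rintro ⟨q, hq, rfl⟩
          rw [Set.mem_iUnion₂] at hq
          obtain ⟨p, hp, hqp⟩ := hq
          exact Set.mem_biUnion hp ⟨q, hqp, rfl⟩
        · intro hz
          rw [Set.mem_iUnion₂] at hz
          obtain ⟨p, hp, hz2⟩ := hz
          obtain ⟨q, hqp, rfl⟩ := hz2
          exact ⟨q, Set.mem_biUnion hp hqp, rfl⟩
      rw [himg]
      apply isGLB_biUnion (g := fun p : SA × SB => pureT EA EB p.1 p.2 a b)
      · intro p hp
        have h1 : IsGLB (a.1 '' (PA p.1)) (a.1 p.1) :=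
          hEA.preserves a.1 a.2 _ (hpdA.2 p.1).1 _ (hpdA.2 p.1).2
        have h2 : IsGLB (b.1 '' (PB p.2)) (b.1 p.2) :=
          hEB.preserves b.1 b.2 _ (hpdB.2 p.2).1 _ (hpdB.2 p.2).2
        exact isGLB_prod_image a.1 b.1 (hpdA.2 p.1).1 (hpdB.2 p.2).1 h1 h2
      · exact hU a b
    obtain ⟨p, hpV, hpe⟩ := hpure F hFsub hFne hFglb
    rw [hV] at hpV
    simp only [Set.mem_iUnion] at hpV
    obtain ⟨q, _, hpq⟩ := hpV
    exact ⟨p.1, p.2, hpq.1.1, hpq.2.1, hpe.symm⟩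
  -- pure tensors of pure states are maximal
  have haveD : ∀ (α : SA) (β : SB), PureState α → PureState β →
      ∀ Ψ ∈ MinTensor EA EB, pureT EA EB α β ≤ Ψ → pureT EA EB α β = Ψ := by
    intro α β hα hβ Ψ hΨ hle
    obtain ⟨U, hUne, hU⟩ := hΨ
    have hαmax : IsMax α := by
      have h := Set.ext_iff.mp hpdA.1 α
      exact h.1 hα
    have hβmax : IsMax β := by
      have h := Set.ext_iff.mp hpdB.1 β
      exact h.1 hβ
    have hA : ∀ p ∈ U, p.1 = α := by
      by_cases hbot : α = ⊥
      · subst hbot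
        intro p _
        exact le_antisymm (hαmax bot_le) bot_le
      · obtain ⟨σ', hσ', a, haE, haY, haN⟩ := hEA.separating α hbot
        set ae : Eff EA := ⟨a, haE⟩ with hae
        set yb : Eff EB := ⟨fun _ => BD.Y, hEB.constY⟩ with hyb
        have h1 : pureT EA EB α β ae yb = BD.Y := by
          show BD.prod (a α) BD.Y = BD.Y
          rw [(haY α).2 le_rfl]
          rfl
        have h2 : Ψ ae yb = BD.Y := Y_le (h1 ▸ hle ae yb)
        intro p hp
        have h3 : Ψ ae yb ≤ pureT EA EB p.1 p.2 ae yb := (hU ae yb).1 ⟨p, hp, rfl⟩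
        rw [h2] at h3
        have h4 : BD.prod (a p.1) BD.Y = BD.Y := Y_le h3
        rw [prod_Y_right] at h4
        exact le_antisymm (hαmax ((haY p.1).1 h4)) ((haY p.1).1 h4)
    have hB : ∀ p ∈ U, p.2 = β := by
      by_cases hbot : β = ⊥
      · subst hbot
        intro p _
        exact le_antisymm (hβmax bot_le) bot_le
      · obtain ⟨τ', hτ', b, hbE, hbY, hbN⟩ := hEB.separating β hbot
        set be : Eff EB := ⟨b, hbE⟩ with hbe
        set ya : Eff EA := ⟨fun _ => BD.Y, hEA.constY⟩ with hya
        have h1 : pureT EA EB α β ya be = BD.Y := by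
          show BD.prod BD.Y (b β) = BD.Y
          rw [(hbY β).2 le_rfl]
          rfl
        have h2 : Ψ ya be = BD.Y := Y_le (h1 ▸ hle ya be)
        intro p hp
        have h3 : Ψ ya be ≤ pureT EA EB p.1 p.2 ya be := (hU ya be).1 ⟨p, hp, rfl⟩
        rw [h2] at h3
        have h4 : BD.prod BD.Y (b p.2) = BD.Y := Y_le h3
        rw [prod_Y_left] at h4
        exact le_antisymm (hβmax ((hbY p.2).1 h4)) ((hbY p.2).1 h4)
    funext a b
    obtain ⟨p₀, hp₀⟩ := hUne
    have hne : ((fun p : SA × SB => pureT EA EB p.1 p.2 a b) '' U).Nonempty :=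
      ⟨_, ⟨p₀, hp₀, rfl⟩⟩
    have hall : ∀ z ∈ (fun p : SA × SB => pureT EA EB p.1 p.2 a b) '' U,
        z = pureT EA EB α β a b := by
      rintro z ⟨p, hp, rfl⟩
      show pureT EA EB p.1 p.2 a b = pureT EA EB α β a b
      rw [hA p hp, hB p hp]
    exact (isGLB_const hne hall).unique (hU a b)
  constructor
  · ext Φ
    simp only [Set.mem_setOf_eq]
    constructor
    · exact fun h => haveC Φ h
    · rintro ⟨α, β, hα, hβ, rfl⟩
      exact haveB _ (haveA α β) (haveD α β hα hβ)
  · ext Φ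
    simp only [Set.mem_setOf_eq]
    constructor
    · intro h
      obtain ⟨α, β, hα, hβ, rfl⟩ := haveC _ h
      exact ⟨haveA α β, haveD α β hα hβ⟩
    · rintro ⟨h1, h2⟩
      exact haveB _ h1 h2
end

section
/- Let 𝔖_A, 𝔖_B be spaces of states admitting descriptions in terms of pure states, with admissible effect spaces ℰ_A, ℰ_B. Then every element Φ of the minimal tensor product 𝔖_A⊗̃𝔖_B equals the pointwise infimum of the set of pure elements of 𝔖_A⊗̃𝔖_B lying above Φ (this set being nonempty); that is, 𝔖_A⊗̃𝔖_B admits a description in terms of pure states. -/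
namespace BD

lemma le_iff' {u v : BD} : u ≤ v ↔ u = bot ∨ u = v := Iff.rfl

lemma prod_Y' (x : BD) : prod x Y = x := by cases x <;> rfl

lemma prod_mono' {x x' y y' : BD} (h1 : x ≤ x') (h2 : y ≤ y') :
    prod x y ≤ prod x' y' := by
  rw [le_iff'] at h1 h2 ⊢
  revert h1 h2
  cases x <;> cases x' <;> cases y <;> cases y' <;> decide

lemma isGLB_iff' {S : Set BD} (hS : S.Nonempty) {g : BD} :
    IsGLB S g ↔ ((g ∈ S ∧ ∀ x ∈ S, g ≤ x) ∨
      (g = bot ∧ ∃ x ∈ S, ∃ y ∈ S, x ≠ y)) := by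
  constructor
  · intro h
    by_cases hsing : ∃ v, ∀ x ∈ S, x = v
    · obtain ⟨v, hv⟩ := hsing
      obtain ⟨x₀, hx₀⟩ := hS
      have hvS : v ∈ S := hv x₀ hx₀ ▸ hx₀
      have h1 : g ≤ v := h.1 hvS
      have h2 : v ≤ g := h.2 (fun x hx => (hv x hx).symm ▸ le_refl v)
      left
      exact ⟨le_antisymm h1 h2 ▸ hvS, h.1⟩
    · push_neg at hsing
      obtain ⟨x₀, hx₀⟩ := hS
      obtain ⟨x₁, hx₁, hne⟩ := hsing x₀
      right
      refine ⟨?_, x₁, hx₁, x₀, hx₀, hne⟩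
      have h1 := h.1 hx₀
      have h2 := h.1 hx₁
      rw [le_iff'] at h1 h2
      rcases h1 with rfl | rfl
      · rfl
      · rcases h2 with h2 | rfl
        · exact h2
        · exact absurd rfl hne
  · rintro (⟨hg, hlb⟩ | ⟨rfl, x, hx, y, hy, hxy⟩)
    · exact ⟨hlb, fun c hc => hc hg⟩
    · refine ⟨fun z _ => Or.inl rfl, fun c hc => ?_⟩
      have h1 := hc hx
      have h2 := hc hy
      rw [le_iff'] at h1 h2 ⊢
      rcases h1 with rfl | rfl
      · exact Or.inl rfl
      · rcases h2 with h2 | rfl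
        · exact Or.inl h2
        · exact absurd rfl hxy

lemma key_glb {X Y : Set BD} (hX : X.Nonempty) (hY : Y.Nonempty) {x y : BD} (c : BD)
    (hx : IsGLB X x) (hy : IsGLB Y y)
    (hc : ∀ u ∈ X, ∀ v ∈ Y, c ≤ prod u v) : c ≤ prod x y := by
  rw [isGLB_iff' hX] at hx
  rw [isGLB_iff' hY] at hy
  rcases hx with ⟨hxm, _⟩ | ⟨rfl, u₁, hu₁, u₂, hu₂, hu⟩ <;>
    rcases hy with ⟨hym, _⟩ | ⟨rfl, v₁, hv₁, v₂, hv₂, hv⟩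
  · exact hc _ hxm _ hym
  · have h1 := hc _ hxm _ hv₁
    have h2 := hc _ hxm _ hv₂
    rw [le_iff'] at h1 h2
    rw [le_iff']
    revert h1 h2 hv
    cases x <;> cases v₁ <;> cases v₂ <;> cases c <;> decide
  · have h1 := hc _ hu₁ _ hym
    have h2 := hc _ hu₂ _ hym
    rw [le_iff'] at h1 h2
    rw [le_iff']
    revert h1 h2 hu
    cases y <;> cases u₁ <;> cases u₂ <;> cases c <;> decide
  · have h11 := hc _ hu₁ _ hv₁
    have h12 := hc _ hu₁ _ hv₂
    have h21 := hc _ hu₂ _ hv₁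
    have h22 := hc _ hu₂ _ hv₂
    rw [le_iff'] at h11 h12 h21 h22
    rw [le_iff']
    revert h11 h12 h21 h22 hu hv
    cases u₁ <;> cases u₂ <;> cases v₁ <;> cases v₂ <;> cases c <;> decide

end BD

lemma mono_of_preservesInf {S : Type*} [Preorder S] {a : S → BD} (h : PreservesInf a)
    {σ τ : S} (hστ : σ ≤ τ) : a σ ≤ a τ := by
  have hglb : IsGLB {σ, τ} σ := by
    constructor
    · rintro x (rfl | rfl)
      · exact le_refl _
      · exact hστ
    · exact fun c hc => hc (Set.mem_insert _ _)
  have h2 := h {σ, τ} ⟨σ, Set.mem_insert _ _⟩ σ hglb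
  exact h2.1 ⟨τ, Set.mem_insert_of_mem _ rfl, rfl⟩

lemma pure_tensor_pure {SA SB : Type*}
    [SemilatticeInf SA] [OrderBot SA] [SemilatticeInf SB] [OrderBot SB]
    (hpdA : PureDescription SA) (hpdB : PureDescription SB)
    (EA : Set (SA → BD)) (EB : Set (SB → BD))
    (hEA : IsAdmissible EA) (hEB : IsAdmissible EB)
    {α : SA} {β : SB} (hα : PureState α) (hβ : PureState β) :
    PureInMin EA EB (pureT EA EB α β) := by
  have hmaxα : IsMax α := (Set.ext_iff.mp hpdA.1 α).mp hα
  have hmaxβ : IsMax β := (Set.ext_iff.mp hpdB.1 β).mp hβ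
  have hmemMin : pureT EA EB α β ∈ MinTensor EA EB := by
    refine ⟨{(α, β)}, Set.singleton_nonempty _, fun a b => ?_⟩
    rw [Set.image_singleton]
    exact isGLB_singleton
  refine ⟨hmemMin, fun F hF hFne hglb => ?_⟩
  -- every element of F equals pureT α β
  have hall : ∀ Θ ∈ F, Θ = pureT EA EB α β := by
    intro Θ hΘ
    obtain ⟨V, hVne, hV⟩ := hF hΘ
    have hle : ∀ (a : Eff EA) (b : Eff EB), pureT EA EB α β a b ≤ Θ a b :=
      fun a b => (hglb a b).1 (Set.mem_image_of_mem _ hΘ)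
    -- all first components of V equal α
    have hfst : ∀ p ∈ V, p.1 = α := by
      by_cases hbot : α = ⊥
      · intro p hp
        have h1 : α ≤ p.1 := hbot ▸ bot_le
        exact le_antisymm (hmaxα h1) h1
      · obtain ⟨σ', _, a, haE, haY, _⟩ := hEA.separating α hbot
        set ae : Eff EA := ⟨a, haE⟩
        set yb : Eff EB := ⟨fun _ => BD.Y, hEB.constY⟩
        have hΨY : pureT EA EB α β ae yb = BD.Y := by
          show BD.prod (a α) BD.Y = BD.Y
          rw [BD.prod_Y', (haY α).mpr le_rfl]
        have hΘY : Θ ae yb = BD.Y := by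
          have := hle ae yb
          rw [hΨY] at this
          rcases this with h | h
          · exact absurd h (by decide)
          · exact h.symm
        intro p hp
        have hlbV := (hV ae yb).1 (Set.mem_image_of_mem _ hp)
        rw [hΘY] at hlbV
        have hpY : a p.1 = BD.Y := by
          have : BD.Y ≤ BD.prod (a p.1) BD.Y := hlbV
          rw [BD.prod_Y'] at this
          rcases this with h | h
          · exact absurd h (by decide)
          · exact h.symm
        have h1 : α ≤ p.1 := (haY p.1).mp hpY
        exact le_antisymm (hmaxα h1) h1
    have hsnd : ∀ p ∈ V, p.2 = β := by
      by_cases hbot : β = ⊥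
      · intro p hp
        have h1 : β ≤ p.2 := hbot ▸ bot_le
        exact le_antisymm (hmaxβ h1) h1
      · obtain ⟨τ', _, b, hbE, hbY, _⟩ := hEB.separating β hbot
        set be : Eff EB := ⟨b, hbE⟩
        set ya : Eff EA := ⟨fun _ => BD.Y, hEA.constY⟩
        have hΨY : pureT EA EB α β ya be = BD.Y := by
          show BD.prod BD.Y (b β) = BD.Y
          rw [(hbY β).mpr le_rfl]
          rfl
        have hΘY : Θ ya be = BD.Y := by
          have := hle ya be
          rw [hΨY] at this
          rcases this with h | h
          · exact absurd h (by decide)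
          · exact h.symm
        intro p hp
        have hlbV := (hV ya be).1 (Set.mem_image_of_mem _ hp)
        rw [hΘY] at hlbV
        have hpY : b p.2 = BD.Y := by
          have h3 : BD.Y ≤ BD.prod BD.Y (b p.2) := hlbV
          rcases h3 with h | h
          · exact absurd h (by decide)
          · cases hb : b p.2
            · rw [hb] at h; exact absurd h.symm (by decide)
            · rfl
            · rw [hb] at h; exact absurd h.symm (by decide)
        have h1 : β ≤ p.2 := (hbY p.2).mp hpY
        exact le_antisymm (hmaxβ h1) h1
    -- hence V = {(α, β)} and Θ = pureT α β
    funext a b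
    have himg : (fun p : SA × SB => pureT EA EB p.1 p.2 a b) '' V
        = {pureT EA EB α β a b} := by
      apply Set.eq_singleton_iff_nonempty_unique_mem.mpr
      refine ⟨hVne.image _, ?_⟩
      rintro _ ⟨p, hp, rfl⟩
      show pureT EA EB p.1 p.2 a b = pureT EA EB α β a b
      rw [hfst p hp, hsnd p hp]
    have := hV a b
    rw [himg] at this
    exact this.unique isGLB_singleton
  obtain ⟨Θ₀, hΘ₀⟩ := hFne
  exact hall Θ₀ hΘ₀ ▸ hΘ₀

/-- every element of the minimal tensor product is the pointwise
infimum of the (nonempty) set of pure elements above it. -/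
theorem min_tensor_pure_description {SA SB : Type*}
    [SemilatticeInf SA] [OrderBot SA] [SemilatticeInf SB] [OrderBot SB]
    (hdcA : DownComplete SA) (hdcB : DownComplete SB)
    (hpdA : PureDescription SA) (hpdB : PureDescription SB)
    (EA : Set (SA → BD)) (EB : Set (SB → BD))
    (hEA : IsAdmissible EA) (hEB : IsAdmissible EB) :
    ∀ Φ ∈ MinTensor EA EB,
      ({Ψ : Eff EA → Eff EB → BD | PureInMin EA EB Ψ ∧ Φ ≤ Ψ}).Nonempty ∧
      ∀ (a : Eff EA) (b : Eff EB),
        IsGLB ((fun Ψ : Eff EA → Eff EB → BD => Ψ a b) ''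
          {Ψ : Eff EA → Eff EB → BD | PureInMin EA EB Ψ ∧ Φ ≤ Ψ}) (Φ a b) := by
  intro Φ hΦ
  obtain ⟨U, hUne, hU⟩ := hΦ
  -- any pure tensor of pure states above a point of U lies in the pure set
  have hmem : ∀ p ∈ U, ∀ α : SA, PureState α → p.1 ≤ α →
      ∀ β : SB, PureState β → p.2 ≤ β →
      pureT EA EB α β ∈ {Ψ : Eff EA → Eff EB → BD | PureInMin EA EB Ψ ∧ Φ ≤ Ψ} := by
    intro p hp α hα hσα β hβ hτβ
    refine ⟨pure_tensor_pure hpdA hpdB EA EB hEA hEB hα hβ, ?_⟩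
    intro a b
    calc Φ a b ≤ pureT EA EB p.1 p.2 a b := (hU a b).1 (Set.mem_image_of_mem _ hp)
      _ ≤ pureT EA EB α β a b :=
        BD.prod_mono' (mono_of_preservesInf (hEA.preserves a.1 a.2) hσα)
          (mono_of_preservesInf (hEB.preserves b.1 b.2) hτβ)
  obtain ⟨p₀, hp₀⟩ := hUne
  obtain ⟨α₀, hα₀⟩ := (hpdA.2 p₀.1).1
  obtain ⟨β₀, hβ₀⟩ := (hpdB.2 p₀.2).1
  refine ⟨⟨pureT EA EB α₀ β₀, hmem p₀ hp₀ α₀ hα₀.1 hα₀.2 β₀ hβ₀.1 hβ₀.2⟩, ?_⟩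
  intro a b
  constructor
  · rintro _ ⟨Ψ, ⟨_, hΦΨ⟩, rfl⟩
    exact hΦΨ a b
  · intro c hc
    refine (hU a b).2 ?_
    rintro _ ⟨p, hp, rfl⟩
    show c ≤ BD.prod (a.1 p.1) (b.1 p.2)
    have hA := hEA.preserves a.1 a.2 _ (hpdA.2 p.1).1 p.1 (hpdA.2 p.1).2
    have hB := hEB.preserves b.1 b.2 _ (hpdB.2 p.2).1 p.2 (hpdB.2 p.2).2
    refine BD.key_glb ((hpdA.2 p.1).1.image a.1) ((hpdB.2 p.2).1.image b.1) c hA hB ?_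
    rintro _ ⟨α, hαm, rfl⟩ _ ⟨β, hβm, rfl⟩
    exact hc (Set.mem_image_of_mem _ (hmem p hp α hαm.1 hαm.2 β hβm.1 hβm.2))
end

section
/- Let 𝔖_A, 𝔖_B be spaces of states admitting descriptions in terms of pure states, with admissible effect spaces ℰ_A, ℰ_B. If Φ and Φ' are two elements of the minimal tensor product 𝔖_A⊗̃𝔖_B which have a common upper bound in 𝔖_A⊗̃𝔖_B, then their supremum in 𝔖_A⊗̃𝔖_B exists and equals the pointwise infimum of the set of pure elements of 𝔖_A⊗̃𝔖_B lying above both Φ and Φ'. -/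
/-! ## Auxiliary lemmas -/

section Aux

lemma bd_glb_exists (T : Set BD) (hT : T.Nonempty) : ∃ g, IsGLB T g := by
  obtain ⟨t, ht⟩ := hT
  by_cases h : ∀ x ∈ T, x = t
  · exact ⟨t, fun x hx => (h x hx) ▸ le_refl t, fun l hl => hl ht⟩
  · push_neg at h
    obtain ⟨x, hx, hxt⟩ := h
    refine ⟨BD.bot, fun y _ => Or.inl rfl, fun l hl => ?_⟩
    rcases hl ht with h1 | h1
    · exact h1 ▸ le_refl _
    · rcases hl hx with h2 | h2
      · exact h2 ▸ le_refl _
      · exact absurd (h2.symm.trans h1) hxt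

lemma isGLB_of_isGLB {α ι : Type*} [Preorder α] (S : Set ι) (T : ι → Set α) (v : ι → α)
    (hT : ∀ i ∈ S, IsGLB (T i) (v i)) (g : α) (hg : IsGLB (v '' S) g) :
    IsGLB (⋃ i ∈ S, T i) g := by
  constructor
  · intro x hx
    simp only [Set.mem_iUnion] at hx
    obtain ⟨i, hi, hxi⟩ := hx
    exact le_trans (hg.1 ⟨i, hi, rfl⟩) ((hT i hi).1 hxi)
  · intro l hl
    refine hg.2 ?_
    rintro x ⟨i, hi, rfl⟩
    exact (hT i hi).2 (fun y hy => hl (Set.mem_biUnion hi hy))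

lemma bd_prod_Y_right (x : BD) : BD.prod x BD.Y = x := by cases x <;> rfl
lemma bd_prod_N_right (x : BD) : BD.prod x BD.N = BD.N := by cases x <;> rfl
lemma bd_prod_comm (x y : BD) : BD.prod x y = BD.prod y x := by cases x <;> cases y <;> rfl

lemma bd_prod_isGLB_left (T : Set BD) (hT : T.Nonempty) (g : BD) (hg : IsGLB T g) (y : BD) :
    IsGLB ((fun x => BD.prod x y) '' T) (BD.prod g y) := by
  cases y with
  | Y =>
    rw [show (fun x => BD.prod x BD.Y) = id from funext bd_prod_Y_right, Set.image_id,
      bd_prod_Y_right]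
    exact hg
  | N =>
    rw [show (fun x => BD.prod x BD.N) = (fun _ => BD.N) from funext bd_prod_N_right,
      hT.image_const, bd_prod_N_right]
    exact isGLB_singleton
  | bot =>
    by_cases hg' : g = BD.N
    · subst hg'
      have hTN : ∀ t ∈ T, t = BD.N := by
        intro t ht
        rcases hg.1 ht with h | h
        · exact absurd h (by intro h; cases h)
        · exact h.symm
      have himg : (fun x => BD.prod x BD.bot) '' T = {BD.N} := by
        refine Set.eq_singleton_iff_nonempty_unique_mem.2 ⟨hT.image _, ?_⟩
        rintro z ⟨t, ht, rfl⟩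
        rw [hTN t ht]
        rfl
      rw [himg]
      exact isGLB_singleton
    · have hgb : BD.prod g BD.bot = BD.bot := by
        cases g with
        | N => exact absurd rfl hg'
        | Y => rfl
        | bot => rfl
      rw [hgb]
      constructor
      · intro x _; exact Or.inl rfl
      · intro l hl
        have hex : ∃ t ∈ T, t ≠ BD.N := by
          by_contra h
          push_neg at h
          obtain ⟨t, ht⟩ := hT
          have htN := h t ht
          apply hg'
          have h1 : BD.N ∈ lowerBounds T := by
            intro x hx; rw [h x hx]
          exact le_antisymm (htN ▸ hg.1 ht) (hg.2 h1)
        obtain ⟨t, ht, htN⟩ := hex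
        have : BD.prod t BD.bot = BD.bot := by
          cases t with
          | N => exact absurd rfl htN
          | Y => rfl
          | bot => rfl
        have := hl ⟨t, ht, this⟩
        exact this

lemma bd_prod_isGLB_right (T : Set BD) (hT : T.Nonempty) (g : BD) (hg : IsGLB T g) (y : BD) :
    IsGLB ((fun x => BD.prod y x) '' T) (BD.prod y g) := by
  rw [show (fun x => BD.prod y x) = (fun x => BD.prod x y) from funext fun x => bd_prod_comm y x,
    bd_prod_comm y g]
  exact bd_prod_isGLB_left T hT g hg y

lemma minTensor_infClosed {SA SB : Type*} (EA : Set (SA → BD)) (EB : Set (SB → BD))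
    (F : Set (Eff EA → Eff EB → BD)) (hF : F ⊆ MinTensor EA EB) (hne : F.Nonempty)
    (Θ : Eff EA → Eff EB → BD)
    (hΘ : ∀ a b, IsGLB ((fun Ψ : Eff EA → Eff EB → BD => Ψ a b) '' F) (Θ a b)) :
    Θ ∈ MinTensor EA EB := by
  classical
  have h : ∀ Ψ : Eff EA → Eff EB → BD, ∃ U : Set (SA × SB), Ψ ∈ F →
      (U.Nonempty ∧ ∀ (a : Eff EA) (b : Eff EB),
        IsGLB ((fun p : SA × SB => pureT EA EB p.1 p.2 a b) '' U) (Ψ a b)) := by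
    intro Ψ
    by_cases hΨ : Ψ ∈ F
    · obtain ⟨U, hU⟩ := hF hΨ
      exact ⟨U, fun _ => hU⟩
    · exact ⟨∅, fun h => absurd h hΨ⟩
  choose Uf hUf using h
  refine ⟨⋃ Ψ ∈ F, Uf Ψ, ?_, ?_⟩
  · obtain ⟨Ψ0, h0⟩ := hne
    obtain ⟨p, hp⟩ := (hUf Ψ0 h0).1
    exact ⟨p, Set.mem_biUnion h0 hp⟩
  · intro a b
    rw [Set.image_iUnion₂]
    exact isGLB_of_isGLB F (fun Ψ => (fun p : SA × SB => pureT EA EB p.1 p.2 a b) '' Uf Ψ)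
      (fun Ψ => Ψ a b) (fun Ψ hΨ => (hUf Ψ hΨ).2 a b) (Θ a b) (hΘ a b)

lemma pureT_mem_min {SA SB : Type*} (EA : Set (SA → BD)) (EB : Set (SB → BD))
    (α : SA) (β : SB) : pureT EA EB α β ∈ MinTensor EA EB := by
  refine ⟨{(α, β)}, Set.singleton_nonempty _, fun a b => ?_⟩
  rw [Set.image_singleton]
  exact isGLB_singleton

lemma pureT_max {SA SB : Type*}
    [SemilatticeInf SA] [OrderBot SA] [SemilatticeInf SB] [OrderBot SB]
    (hpdA : PureDescription SA) (hpdB : PureDescription SB)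
    {EA : Set (SA → BD)} {EB : Set (SB → BD)}
    (hEA : IsAdmissible EA) (hEB : IsAdmissible EB)
    (α : SA) (β : SB) (hα : PureState α) (hβ : PureState β)
    (Ψ : Eff EA → Eff EB → BD) (hΨ : Ψ ∈ MinTensor EA EB)
    (hle : ∀ (a : Eff EA) (b : Eff EB), pureT EA EB α β a b ≤ Ψ a b) :
    Ψ = pureT EA EB α β := by
  obtain ⟨U, hUne, hUglb⟩ := hΨ
  have hαmax : IsMax α := by
    have := hpdA.1 ▸ (Set.mem_setOf_eq ▸ hα : α ∈ {σ : SA | PureState σ})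
    exact this
  have hβmax : IsMax β := by
    have := hpdB.1 ▸ (Set.mem_setOf_eq ▸ hβ : β ∈ {σ : SB | PureState σ})
    exact this
  have hkey : ∀ p ∈ U, p.1 = α ∧ p.2 = β := by
    rintro ⟨σ, τ⟩ hp
    have hptle : ∀ (a : Eff EA) (b : Eff EB),
        pureT EA EB α β a b ≤ pureT EA EB σ τ a b := fun a b =>
      le_trans (hle a b) ((hUglb a b).1 ⟨(σ, τ), hp, rfl⟩)
    have hσα : α ≤ σ := by
      by_cases hbot : α = ⊥
      · exact hbot ▸ bot_le
      · obtain ⟨α', hα', aF, haF, haY, haN⟩ := hEA.separating α hbot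
        set aE : Eff EA := ⟨aF, haF⟩
        set yB : Eff EB := ⟨fun _ => BD.Y, hEB.constY⟩
        have h1 : pureT EA EB α β aE yB = BD.Y := by
          show BD.prod (aF α) BD.Y = BD.Y
          rw [bd_prod_Y_right, (haY α).2 le_rfl]
        have h2 := hptle aE yB
        rw [h1] at h2
        have h3 : pureT EA EB σ τ aE yB = BD.Y := by
          rcases h2 with h | h
          · cases h
          · exact h.symm
        have h4 : BD.prod (aF σ) BD.Y = BD.Y := h3
        rw [bd_prod_Y_right] at h4
        exact (haY σ).1 h4
      -- end
    have hτβ : β ≤ τ := by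
      by_cases hbot : β = ⊥
      · exact hbot ▸ bot_le
      · obtain ⟨β', hβ', bF, hbF, hbY, hbN⟩ := hEB.separating β hbot
        set bE : Eff EB := ⟨bF, hbF⟩
        set yA : Eff EA := ⟨fun _ => BD.Y, hEA.constY⟩
        have h1 : pureT EA EB α β yA bE = BD.Y := by
          show BD.prod BD.Y (bF β) = BD.Y
          rw [bd_prod_comm, bd_prod_Y_right, (hbY β).2 le_rfl]
        have h2 := hptle yA bE
        rw [h1] at h2
        have h3 : pureT EA EB σ τ yA bE = BD.Y := by
          rcases h2 with h | h
          · cases h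
          · exact h.symm
        have h4 : BD.prod BD.Y (bF τ) = BD.Y := h3
        rw [bd_prod_comm, bd_prod_Y_right] at h4
        exact (hbY τ).1 h4
    exact ⟨le_antisymm (hαmax hσα) hσα, le_antisymm (hβmax hτβ) hτβ⟩
  funext a b
  have himg : (fun p : SA × SB => pureT EA EB p.1 p.2 a b) '' U = {pureT EA EB α β a b} := by
    refine Set.eq_singleton_iff_nonempty_unique_mem.2 ⟨hUne.image _, ?_⟩
    rintro z ⟨p, hp, rfl⟩
    show pureT EA EB p.1 p.2 a b = pureT EA EB α β a b
    rw [(hkey p hp).1, (hkey p hp).2]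
  have := hUglb a b
  rw [himg] at this
  exact le_antisymm (this.1 rfl) (this.2 (fun y hy => hy ▸ le_rfl))

lemma pureT_pure {SA SB : Type*}
    [SemilatticeInf SA] [OrderBot SA] [SemilatticeInf SB] [OrderBot SB]
    (hpdA : PureDescription SA) (hpdB : PureDescription SB)
    {EA : Set (SA → BD)} {EB : Set (SB → BD)}
    (hEA : IsAdmissible EA) (hEB : IsAdmissible EB)
    (α : SA) (β : SB) (hα : PureState α) (hβ : PureState β) :
    PureInMin EA EB (pureT EA EB α β) := by
  refine ⟨pureT_mem_min EA EB α β, fun F hF hne hglb => ?_⟩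
  obtain ⟨Ψ, hΨ⟩ := hne
  have hle : ∀ (a : Eff EA) (b : Eff EB), pureT EA EB α β a b ≤ Ψ a b := fun a b =>
    (hglb a b).1 ⟨Ψ, hΨ, rfl⟩
  have := pureT_max hpdA hpdB hEA hEB α β hα hβ Ψ (hF hΨ) hle
  exact this ▸ hΨ

lemma pureT_glb_pure {SA SB : Type*}
    [SemilatticeInf SA] [OrderBot SA] [SemilatticeInf SB] [OrderBot SB]
    (hpdA : PureDescription SA) (hpdB : PureDescription SB)
    {EA : Set (SA → BD)} {EB : Set (SB → BD)}
    (hEA : IsAdmissible EA) (hEB : IsAdmissible EB)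
    (σ : SA) (τ : SB) (a : Eff EA) (b : Eff EB) :
    IsGLB ((fun p : SA × SB => pureT EA EB p.1 p.2 a b) ''
      ({α : SA | PureState α ∧ σ ≤ α} ×ˢ {β : SB | PureState β ∧ τ ≤ β}))
      (pureT EA EB σ τ a b) := by
  obtain ⟨hneα, hglbα⟩ := hpdA.2 σ
  obtain ⟨hneβ, hglbβ⟩ := hpdB.2 τ
  set Tα := {α : SA | PureState α ∧ σ ≤ α}
  set Tβ := {β : SB | PureState β ∧ τ ≤ β}
  have haglb : IsGLB (a.1 '' Tα) (a.1 σ) := hEA.preserves a.1 a.2 Tα hneα σ hglbα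
  have hbglb : IsGLB (b.1 '' Tβ) (b.1 τ) := hEB.preserves b.1 b.2 Tβ hneβ τ hglbβ
  have step1 : IsGLB ((fun α => BD.prod (a.1 α) (b.1 τ)) '' Tα)
      (BD.prod (a.1 σ) (b.1 τ)) := by
    have := bd_prod_isGLB_left (a.1 '' Tα) (hneα.image _) (a.1 σ) haglb (b.1 τ)
    rwa [Set.image_image] at this
  have step2 : ∀ α ∈ Tα, IsGLB ((fun β => BD.prod (a.1 α) (b.1 β)) '' Tβ)
      (BD.prod (a.1 α) (b.1 τ)) := by
    intro α _
    have := bd_prod_isGLB_right (b.1 '' Tβ) (hneβ.image _) (b.1 τ) hbglb (a.1 α)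
    rwa [Set.image_image] at this
  have step3 : IsGLB (⋃ α ∈ Tα, (fun β => BD.prod (a.1 α) (b.1 β)) '' Tβ)
      (BD.prod (a.1 σ) (b.1 τ)) :=
    isGLB_of_isGLB Tα _ _ step2 _ step1
  have himg : (⋃ α ∈ Tα, (fun β => BD.prod (a.1 α) (b.1 β)) '' Tβ) =
      (fun p : SA × SB => pureT EA EB p.1 p.2 a b) '' (Tα ×ˢ Tβ) := by
    ext z
    simp only [Set.mem_iUnion, Set.mem_image, Set.mem_prod, pureT]
    constructor
    · rintro ⟨α, hα, β, hβ, rfl⟩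
      exact ⟨(α, β), ⟨hα, hβ⟩, rfl⟩
    · rintro ⟨⟨α, β⟩, ⟨hα, hβ⟩, rfl⟩
      exact ⟨α, hα, β, hβ, rfl⟩
  rw [himg] at step3
  exact step3

end Aux

/-- two elements of the minimal tensor product with a common upper
bound have a supremum there, equal to the pointwise infimum of the pure elements
above both. -/
theorem min_tensor_sup_exists {SA SB : Type*}
    [SemilatticeInf SA] [OrderBot SA] [SemilatticeInf SB] [OrderBot SB]
    (hdcA : DownComplete SA) (hdcB : DownComplete SB)
    (hpdA : PureDescription SA) (hpdB : PureDescription SB)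
    (EA : Set (SA → BD)) (EB : Set (SB → BD))
    (hEA : IsAdmissible EA) (hEB : IsAdmissible EB)
    (Φ Φ' : Eff EA → Eff EB → BD)
    (hΦ : Φ ∈ MinTensor EA EB) (hΦ' : Φ' ∈ MinTensor EA EB)
    (hub : ∃ Θ ∈ MinTensor EA EB, Φ ≤ Θ ∧ Φ' ≤ Θ) :
    ∃ Θ ∈ MinTensor EA EB, Φ ≤ Θ ∧ Φ' ≤ Θ ∧
      (∀ Ψ ∈ MinTensor EA EB, Φ ≤ Ψ → Φ' ≤ Ψ → Θ ≤ Ψ) ∧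
      ∀ (a : Eff EA) (b : Eff EB),
        IsGLB ((fun Ψ : Eff EA → Eff EB → BD => Ψ a b) ''
          {Ψ : Eff EA → Eff EB → BD | PureInMin EA EB Ψ ∧ Φ ≤ Ψ ∧ Φ' ≤ Ψ})
          (Θ a b) := by
  classical
  set P := {Ψ : Eff EA → Eff EB → BD | PureInMin EA EB Ψ ∧ Φ ≤ Ψ ∧ Φ' ≤ Ψ} with hP
  set S := {Ψ : Eff EA → Eff EB → BD | Ψ ∈ MinTensor EA EB ∧ Φ ≤ Ψ ∧ Φ' ≤ Ψ} with hS
  have hSne : S.Nonempty := by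
    obtain ⟨Θ0, h1, h2, h3⟩ := hub
    exact ⟨Θ0, h1, h2, h3⟩
  have hglbex : ∀ (a : Eff EA) (b : Eff EB),
      ∃ g, IsGLB ((fun Ψ : Eff EA → Eff EB → BD => Ψ a b) '' S) g :=
    fun a b => bd_glb_exists _ (hSne.image _)
  choose Θ hΘglb using hglbex
  have hΘmem : Θ ∈ MinTensor EA EB :=
    minTensor_infClosed EA EB S (fun Ψ h => h.1) hSne Θ hΘglb
  have hΦΘ : Φ ≤ Θ := by
    rw [Pi.le_def]; intro a; rw [Pi.le_def]; intro b
    refine (hΘglb a b).2 ?_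
    rintro x ⟨Ψ, hΨ, rfl⟩
    exact (Pi.le_def.1 ((Pi.le_def.1 hΨ.2.1) a)) b
  have hΦ'Θ : Φ' ≤ Θ := by
    rw [Pi.le_def]; intro a; rw [Pi.le_def]; intro b
    refine (hΘglb a b).2 ?_
    rintro x ⟨Ψ, hΨ, rfl⟩
    exact (Pi.le_def.1 ((Pi.le_def.1 hΨ.2.2) a)) b
  have hleast : ∀ Ψ ∈ MinTensor EA EB, Φ ≤ Ψ → Φ' ≤ Ψ → Θ ≤ Ψ := by
    intro Ψ hm h1 h2
    rw [Pi.le_def]; intro a; rw [Pi.le_def]; intro b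
    exact (hΘglb a b).1 ⟨Ψ, ⟨hm, h1, h2⟩, rfl⟩
  refine ⟨Θ, hΘmem, hΦΘ, hΦ'Θ, hleast, ?_⟩
  obtain ⟨U, hUne, hUglb⟩ := hΘmem
  set V := ⋃ p ∈ U, ({α : SA | PureState α ∧ p.1 ≤ α} ×ˢ
    {β : SB | PureState β ∧ p.2 ≤ β}) with hV
  have hVglb : ∀ (a : Eff EA) (b : Eff EB),
      IsGLB ((fun q : SA × SB => pureT EA EB q.1 q.2 a b) '' V) (Θ a b) := by
    intro a b
    rw [hV, Set.image_iUnion₂]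
    exact isGLB_of_isGLB U
      (fun p : SA × SB => (fun q : SA × SB => pureT EA EB q.1 q.2 a b) ''
        ({α : SA | PureState α ∧ p.1 ≤ α} ×ˢ {β : SB | PureState β ∧ p.2 ≤ β}))
      (fun p : SA × SB => pureT EA EB p.1 p.2 a b)
      (fun p _ => pureT_glb_pure hpdA hpdB hEA hEB p.1 p.2 a b) _ (hUglb a b)
  have hVmem : ∀ q ∈ V, pureT EA EB q.1 q.2 ∈ P := by
    intro q hq
    have hq' := hq
    simp only [hV, Set.mem_iUnion, Set.mem_prod, Set.mem_setOf_eq] at hq'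
    obtain ⟨p, hp, ⟨hq1, -⟩, ⟨hq2, -⟩⟩ := hq'
    have hpure := pureT_pure hpdA hpdB hEA hEB q.1 q.2 hq1 hq2
    have hΘle : Θ ≤ pureT EA EB q.1 q.2 := by
      rw [Pi.le_def]; intro a; rw [Pi.le_def]; intro b
      exact (hVglb a b).1 ⟨q, hq, rfl⟩
    exact ⟨hpure, le_trans hΦΘ hΘle, le_trans hΦ'Θ hΘle⟩
  intro a b
  constructor
  · rintro x ⟨Ψ, hΨ, rfl⟩
    exact (hΘglb a b).1 ⟨Ψ, ⟨hΨ.1.1, hΨ.2⟩, rfl⟩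
  · intro l hl
    refine (hVglb a b).2 ?_
    rintro x ⟨q, hq, rfl⟩
    exact hl ⟨pureT EA EB q.1 q.2, hVmem q hq, rfl⟩
end

section
/- Let 𝔖_A, 𝔖_B be orthocomplemented spaces of states admitting descriptions in terms of pure states, with effect spaces ℰ_A = Ē_{𝔖_A} and ℰ_B = Ē_{𝔖_B} the reduced effect spaces. If 𝔖_A or 𝔖_B is a simplex, then the regular tensor product coincides with the minimal tensor product: 𝔖_A⊗̂𝔖_B = 𝔖_A⊗̃𝔖_B. -/
/-! ## Auxiliary material for the proof -/

namespace TensorAux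

open BD

lemma bd_le_iff {x y : BD} : x ≤ y ↔ x = BD.bot ∨ x = y := Iff.rfl

lemma bd_bot_le (x : BD) : BD.bot ≤ x := Or.inl rfl

lemma eq_Y_of_Y_le {x : BD} (h : BD.Y ≤ x) : x = BD.Y := by
  rcases h with h | h
  · exact absurd h (by simp)
  · exact h.symm

lemma eq_N_of_N_le {x : BD} (h : BD.N ≤ x) : x = BD.N := by
  rcases h with h | h
  · exact absurd h (by simp)
  · exact h.symm

lemma bd_le_Y_iff {x : BD} : x ≤ BD.Y ↔ x ≠ BD.N := by
  constructor
  · rintro (h | h) <;> simp [h]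
  · intro h; cases x
    · exact Or.inl rfl
    · exact Or.inr rfl
    · exact absurd rfl h

lemma bd_le_N_iff {x : BD} : x ≤ BD.N ↔ x ≠ BD.Y := by
  constructor
  · rintro (h | h) <;> simp [h]
  · intro h; cases x
    · exact Or.inl rfl
    · exact absurd rfl h
    · exact Or.inr rfl

lemma inv_inv (x : BD) : BD.inv (BD.inv x) = x := by cases x <;> rfl

lemma inv_eq_Y {x : BD} : BD.inv x = BD.Y ↔ x = BD.N := by cases x <;> simp [BD.inv]

lemma inv_eq_N {x : BD} : BD.inv x = BD.N ↔ x = BD.Y := by cases x <;> simp [BD.inv]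

lemma inv_eq_bot {x : BD} : BD.inv x = BD.bot ↔ x = BD.bot := by cases x <;> simp [BD.inv]

lemma inv_le_inv {x y : BD} (h : x ≤ y) : BD.inv x ≤ BD.inv y := by
  rcases h with h | h
  · subst h; exact Or.inl rfl
  · subst h; exact Or.inr rfl

lemma prod_comm (x y : BD) : BD.prod x y = BD.prod y x := by cases x <;> cases y <;> rfl

lemma prod_Y_right (x : BD) : BD.prod x BD.Y = x := by cases x <;> rfl

lemma prod_Y_left (x : BD) : BD.prod BD.Y x = x := by cases x <;> rfl

lemma prod_N_right (x : BD) : BD.prod x BD.N = BD.N := by cases x <;> rfl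

lemma prod_N_left (x : BD) : BD.prod BD.N x = BD.N := by cases x <;> rfl

lemma prod_eq_Y {x y : BD} : BD.prod x y = BD.Y ↔ (x = BD.Y ∧ y = BD.Y) := by
  cases x <;> cases y <;> simp [BD.prod]

lemma prod_eq_N {x y : BD} : BD.prod x y = BD.N ↔ (x = BD.N ∨ y = BD.N) := by
  cases x <;> cases y <;> simp [BD.prod]

lemma inf_self_inv (x : BD) : x ⊓ BD.inv x = BD.bot := by cases x <;> rfl

lemma inf_eq_N {x y : BD} : x ⊓ y = BD.N ↔ (x = BD.N ∧ y = BD.N) := by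
  cases x <;> cases y <;> simp [min, SemilatticeInf.inf]

/-- The workhorse: characterization of greatest lower bounds in `BD`. -/
lemma isGLB_bd_iff {S : Set BD} (hS : S.Nonempty) {v : BD} :
    IsGLB S v ↔ ((v = BD.Y ∧ ∀ x ∈ S, x = BD.Y) ∨ (v = BD.N ∧ ∀ x ∈ S, x = BD.N) ∨
      (v = BD.bot ∧ (∃ x ∈ S, x ≠ BD.Y) ∧ (∃ x ∈ S, x ≠ BD.N))) := by
  constructor
  · intro h
    cases v with
    | Y => exact Or.inl ⟨rfl, fun x hx => eq_Y_of_Y_le (h.1 hx)⟩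
    | N => exact Or.inr (Or.inl ⟨rfl, fun x hx => eq_N_of_N_le (h.1 hx)⟩)
    | bot =>
      refine Or.inr (Or.inr ⟨rfl, ?_, ?_⟩)
      · by_contra hc
        push_neg at hc
        have : BD.Y ≤ BD.bot := h.2 (fun x hx => by rw [hc x hx])
        rcases this with h' | h' <;> simp_all
      · by_contra hc
        push_neg at hc
        have : BD.N ≤ BD.bot := h.2 (fun x hx => by rw [hc x hx])
        rcases this with h' | h' <;> simp_all
  · rintro (⟨rfl, hall⟩ | ⟨rfl, hall⟩ | ⟨rfl, ⟨x₁, hx₁, hx₁'⟩, ⟨x₂, hx₂, hx₂'⟩⟩)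
    · constructor
      · intro x hx; rw [hall x hx]
      · intro w hw
        obtain ⟨x, hx⟩ := hS
        have := hw hx
        rw [hall x hx] at this
        exact this
    · constructor
      · intro x hx; rw [hall x hx]
      · intro w hw
        obtain ⟨x, hx⟩ := hS
        have := hw hx
        rw [hall x hx] at this
        exact this
    · constructor
      · intro x _; exact bd_bot_le x
      · intro w hw
        have h1 := hw hx₁
        have h2 := hw hx₂
        cases w with
        | bot => exact le_refl _
        | Y => exact absurd (eq_Y_of_Y_le h1) hx₁'
        | N => exact absurd (eq_N_of_N_le h2) hx₂'

lemma allY_of_isGLB {T : Set BD} {v : BD} (h : IsGLB T v) (hv : v = BD.Y) :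
    ∀ x ∈ T, x = BD.Y := by
  intro x hx
  subst hv
  exact eq_Y_of_Y_le (h.1 hx)

lemma allN_of_isGLB {T : Set BD} {v : BD} (h : IsGLB T v) (hv : v = BD.N) :
    ∀ x ∈ T, x = BD.N := by
  intro x hx
  subst hv
  exact eq_N_of_N_le (h.1 hx)

lemma glb_eq_Y_of_all {T : Set BD} (hT : T.Nonempty) {v : BD} (h : IsGLB T v)
    (hall : ∀ x ∈ T, x = BD.Y) : v = BD.Y := by
  refine eq_Y_of_Y_le (h.2 ?_)
  intro x hx
  rw [hall x hx]

lemma glb_eq_N_of_all {T : Set BD} (hT : T.Nonempty) {v : BD} (h : IsGLB T v)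
    (hall : ∀ x ∈ T, x = BD.N) : v = BD.N := by
  refine eq_N_of_N_le (h.2 ?_)
  intro x hx
  rw [hall x hx]

lemma isGLB_pair_inf (x y : BD) : IsGLB {x, y} (x ⊓ y) := by
  constructor
  · rintro z (rfl | rfl)
    · exact inf_le_left
    · exact inf_le_right
  · intro w hw
    exact le_inf (hw (Or.inl rfl)) (hw (Or.inr rfl))

lemma Y_inf_N : (BD.Y ⊓ BD.N) = BD.bot := by
  simp [min, SemilatticeInf.inf]

lemma inf_eq_Y {x y : BD} : x ⊓ y = BD.Y ↔ (x = BD.Y ∧ y = BD.Y) := by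
  cases x <;> cases y <;> simp [min, SemilatticeInf.inf]

section Effects

variable {S : Type*} [SemilatticeInf S] [OrderBot S]

lemma preservesInf_mono {a : S → BD} (ha : PreservesInf a) {σ η : S} (h : σ ≤ η) :
    a σ ≤ a η := by
  have hglb : IsGLB ({σ, η} : Set S) σ := by
    constructor
    · rintro z (rfl | rfl)
      · exact le_refl _
      · exact h
    · intro w hw; exact hw (Or.inl rfl)
  have := ha {σ, η} ⟨σ, Or.inl rfl⟩ σ hglb
  exact this.1 ⟨η, Or.inr rfl, rfl⟩

lemma pInf_eq_Y_iff {a : S → BD} (ha : PreservesInf a) {T : Set S} (hT : T.Nonempty)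
    {g : S} (hg : IsGLB T g) : a g = BD.Y ↔ ∀ t ∈ T, a t = BD.Y := by
  have h := ha T hT g hg
  rw [isGLB_bd_iff (hT.image a)] at h
  constructor
  · intro hY t ht
    rcases h with ⟨_, hall⟩ | ⟨hN, _⟩ | ⟨hb, _⟩
    · exact hall (a t) ⟨t, ht, rfl⟩
    · rw [hY] at hN; exact absurd hN (by simp)
    · rw [hY] at hb; exact absurd hb (by simp)
  · intro hall
    rcases h with ⟨hv, _⟩ | ⟨_, hallN⟩ | ⟨_, ⟨x, ⟨t, ht, rfl⟩, hx'⟩, _⟩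
    · exact hv
    · obtain ⟨t, ht⟩ := hT
      have h1 := hallN (a t) ⟨t, ht, rfl⟩
      have h2 := hall t ht
      rw [h2] at h1; exact absurd h1 (by simp)
    · exact absurd (hall t ht) hx'

lemma pInf_eq_N_iff {a : S → BD} (ha : PreservesInf a) {T : Set S} (hT : T.Nonempty)
    {g : S} (hg : IsGLB T g) : a g = BD.N ↔ ∀ t ∈ T, a t = BD.N := by
  have h := ha T hT g hg
  rw [isGLB_bd_iff (hT.image a)] at h
  constructor
  · intro hY t ht
    rcases h with ⟨hN, _⟩ | ⟨_, hall⟩ | ⟨hb, _⟩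
    · rw [hY] at hN; exact absurd hN (by simp)
    · exact hall (a t) ⟨t, ht, rfl⟩
    · rw [hY] at hb; exact absurd hb (by simp)
  · intro hall
    rcases h with ⟨_, hallN⟩ | ⟨hv, _⟩ | ⟨_, _, ⟨x, ⟨t, ht, rfl⟩, hx'⟩⟩
    · obtain ⟨t, ht⟩ := hT
      have h1 := hallN (a t) ⟨t, ht, rfl⟩
      have h2 := hall t ht
      rw [h2] at h1; exact absurd h1 (by simp)
    · exact hv
    · exact absurd (hall t ht) hx'

lemma constY_preservesInf : PreservesInf (fun _ : S => BD.Y) := by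
  intro T hT g _
  rw [isGLB_bd_iff (hT.image _)]
  exact Or.inl ⟨rfl, by rintro x ⟨t, _, rfl⟩; rfl⟩

lemma constN_preservesInf : PreservesInf (fun _ : S => BD.N) := by
  intro T hT g _
  rw [isGLB_bd_iff (hT.image _)]
  exact Or.inr (Or.inl ⟨rfl, by rintro x ⟨t, _, rfl⟩; rfl⟩)

lemma constBot_preservesInf : PreservesInf (fun _ : S => BD.bot) := by
  intro T hT g _
  rw [isGLB_bd_iff (hT.image _)]
  obtain ⟨t, ht⟩ := hT
  exact Or.inr (Or.inr ⟨rfl, ⟨BD.bot, ⟨t, ht, rfl⟩, by simp⟩, ⟨BD.bot, ⟨t, ht, rfl⟩, by simp⟩⟩)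

variable (star : S → S)

lemma constY_mem : (fun _ : S => BD.Y) ∈ ReducedEffects star := by
  refine ⟨constY_preservesInf, fun σ σ' _ hN => ?_⟩
  exfalso
  have : σ' ∈ {η : S | σ' ≤ η} := le_refl σ'
  rw [← hN] at this
  simp at this

lemma constN_mem : (fun _ : S => BD.N) ∈ ReducedEffects star := by
  refine ⟨constN_preservesInf, fun σ σ' hY _ => ?_⟩
  exfalso
  have : σ ∈ {η : S | σ ≤ η} := le_refl σ
  rw [← hY] at this
  simp at this

lemma constBot_mem : (fun _ : S => BD.bot) ∈ ReducedEffects star := by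
  refine ⟨constBot_preservesInf, fun σ σ' hY _ => ?_⟩
  exfalso
  have : σ ∈ {η : S | σ ≤ η} := le_refl σ
  rw [← hY] at this
  simp at this

open Classical in
/-- The effect which is `Y` on the upper set of `σ₀` and `⊥` elsewhere. -/
noncomputable def Uef (σ₀ : S) : S → BD := fun η => if σ₀ ≤ η then BD.Y else BD.bot

lemma Uef_eq_Y_iff {σ₀ η : S} : Uef σ₀ η = BD.Y ↔ σ₀ ≤ η := by
  unfold Uef
  by_cases h : σ₀ ≤ η <;> simp [h]

lemma Uef_ne_N (σ₀ η : S) : Uef σ₀ η ≠ BD.N := by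
  unfold Uef
  by_cases h : σ₀ ≤ η <;> simp [h]

lemma Uef_self (σ₀ : S) : Uef σ₀ σ₀ = BD.Y := Uef_eq_Y_iff.2 (le_refl _)

lemma Uef_preservesInf (σ₀ : S) : PreservesInf (Uef σ₀) := by
  intro T hT g hg
  rw [isGLB_bd_iff (hT.image _)]
  by_cases h : σ₀ ≤ g
  · refine Or.inl ⟨Uef_eq_Y_iff.2 h, ?_⟩
    rintro x ⟨t, ht, rfl⟩
    exact Uef_eq_Y_iff.2 (le_trans h (hg.1 ht))
  · refine Or.inr (Or.inr ⟨?_, ?_, ?_⟩)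
    · unfold Uef; simp [h]
    · by_contra hc
      push_neg at hc
      exact h (hg.2 (fun t ht => Uef_eq_Y_iff.1 (hc _ ⟨t, ht, rfl⟩)))
    · obtain ⟨t, ht⟩ := hT
      exact ⟨Uef σ₀ t, ⟨t, ht, rfl⟩, Uef_ne_N σ₀ t⟩

lemma mem_of_ne_N {a : S → BD} (ha : PreservesInf a) (hN : ∀ η, a η ≠ BD.N) :
    a ∈ ReducedEffects star := by
  refine ⟨ha, fun σ σ' _ hNpre => ?_⟩
  exfalso
  have : σ' ∈ {η : S | σ' ≤ η} := le_refl σ'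
  rw [← hNpre] at this
  exact hN σ' this

lemma Uef_mem (σ₀ : S) : Uef σ₀ ∈ ReducedEffects star :=
  mem_of_ne_N star (Uef_preservesInf σ₀) (Uef_ne_N σ₀)

lemma inv_preservesInf {a : S → BD} (ha : PreservesInf a) :
    PreservesInf (fun σ => BD.inv (a σ)) := by
  intro T hT g hg
  have h := ha T hT g hg
  rw [isGLB_bd_iff (hT.image a)] at h
  rw [isGLB_bd_iff (hT.image _)]
  rcases h with ⟨hv, hall⟩ | ⟨hv, hall⟩ | ⟨hv, ⟨x, ⟨t, ht, rfl⟩, hx⟩, ⟨x', ⟨t', ht', rfl⟩, hx'⟩⟩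
  · refine Or.inr (Or.inl ⟨show BD.inv (a g) = BD.N by rw [hv]; rfl, ?_⟩)
    rintro x ⟨t, ht, rfl⟩
    show BD.inv (a t) = BD.N
    rw [hall (a t) ⟨t, ht, rfl⟩]; rfl
  · refine Or.inl ⟨show BD.inv (a g) = BD.Y by rw [hv]; rfl, ?_⟩
    rintro x ⟨t, ht, rfl⟩
    show BD.inv (a t) = BD.Y
    rw [hall (a t) ⟨t, ht, rfl⟩]; rfl
  · refine Or.inr (Or.inr ⟨show BD.inv (a g) = BD.bot by rw [hv]; rfl, ?_, ?_⟩)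
    · exact ⟨BD.inv (a t'), ⟨t', ht', rfl⟩, fun hc => hx' (inv_eq_Y.1 hc)⟩
    · exact ⟨BD.inv (a t), ⟨t, ht, rfl⟩, fun hc => hx (inv_eq_N.1 hc)⟩

lemma inv_mem (hoS : IsOrtho star) {a : S → BD} (ha : a ∈ ReducedEffects star) :
    (fun σ => BD.inv (a σ)) ∈ ReducedEffects star := by
  refine ⟨inv_preservesInf ha.1, fun σ σ' hY hN => ?_⟩
  have hYa : a ⁻¹' {BD.N} = {η : S | σ ≤ η} := by
    rw [← hY]; ext η; simp [Set.mem_preimage, inv_eq_Y]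
  have hNa : a ⁻¹' {BD.Y} = {η : S | σ' ≤ η} := by
    rw [← hN]; ext η; simp [Set.mem_preimage, inv_eq_N]
  have key : star σ' ≤ σ := ha.2 σ' σ hNa hYa
  have hσ : σ ≠ ⊥ := by
    rintro rfl
    have h1 : a σ' = BD.N := by
      have : σ' ∈ {η : S | (⊥ : S) ≤ η} := bot_le
      rw [← hYa] at this; exact this
    have h2 : a σ' = BD.Y := by
      have : σ' ∈ {η : S | σ' ≤ η} := le_refl σ'
      rw [← hNa] at this; exact this
    rw [h1] at h2; exact absurd h2 (by simp)
  have hσ' : σ' ≠ ⊥ := by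
    rintro rfl
    have h1 : a σ = BD.Y := by
      have : σ ∈ {η : S | (⊥ : S) ≤ η} := bot_le
      rw [← hNa] at this; exact this
    have h2 : a σ = BD.N := by
      have : σ ∈ {η : S | σ ≤ η} := le_refl σ
      rw [← hYa] at this; exact this
    rw [h1] at h2; exact absurd h2 (by simp)
  have := hoS.anti (star σ') σ (hoS.ne_bot σ' hσ') hσ key
  rwa [hoS.invol σ' hσ'] at this

lemma inf_preservesInf {a b : S → BD} (ha : PreservesInf a) (hb : PreservesInf b) :
    PreservesInf (fun σ => a σ ⊓ b σ) := by
  intro T hT g hg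
  rw [isGLB_bd_iff (hT.image _)]
  rcases hv : a g ⊓ b g with _ | _ | _
  · refine Or.inr (Or.inr ⟨hv, ?_, ?_⟩)
    · by_contra hc
      push_neg at hc
      have hall : ∀ t ∈ T, a t = BD.Y ∧ b t = BD.Y := by
        intro t ht
        exact inf_eq_Y.1 (hc _ ⟨t, ht, rfl⟩)
      have h1 : a g = BD.Y := (pInf_eq_Y_iff ha hT hg).2 (fun t ht => (hall t ht).1)
      have h2 : b g = BD.Y := (pInf_eq_Y_iff hb hT hg).2 (fun t ht => (hall t ht).2)
      have h3 : a g ⊓ b g = BD.Y := inf_eq_Y.2 ⟨h1, h2⟩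
      rw [hv] at h3; exact absurd h3 (by simp)
    · by_contra hc
      push_neg at hc
      have hall : ∀ t ∈ T, a t = BD.N ∧ b t = BD.N := by
        intro t ht
        exact inf_eq_N.1 (hc _ ⟨t, ht, rfl⟩)
      have h1 : a g = BD.N := (pInf_eq_N_iff ha hT hg).2 (fun t ht => (hall t ht).1)
      have h2 : b g = BD.N := (pInf_eq_N_iff hb hT hg).2 (fun t ht => (hall t ht).2)
      have h3 : a g ⊓ b g = BD.N := inf_eq_N.2 ⟨h1, h2⟩
      rw [hv] at h3; exact absurd h3 (by simp)
  · obtain ⟨hay, hby⟩ := inf_eq_Y.1 hv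
    refine Or.inl ⟨hv, ?_⟩
    rintro x ⟨t, ht, rfl⟩
    show a t ⊓ b t = BD.Y
    rw [(pInf_eq_Y_iff ha hT hg).1 hay t ht, (pInf_eq_Y_iff hb hT hg).1 hby t ht]
    exact inf_eq_Y.2 ⟨rfl, rfl⟩
  · obtain ⟨hay, hby⟩ := inf_eq_N.1 hv
    refine Or.inr (Or.inl ⟨hv, ?_⟩)
    rintro x ⟨t, ht, rfl⟩
    show a t ⊓ b t = BD.N
    rw [(pInf_eq_N_iff ha hT hg).1 hay t ht, (pInf_eq_N_iff hb hT hg).1 hby t ht]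
    exact inf_eq_N.2 ⟨rfl, rfl⟩

end Effects

section Variant

variable {S : Type*} [SemilatticeInf S] [OrderBot S] (star : S → S)

/-- The constant-`Y` effect. -/
noncomputable def yEff : Eff (ReducedEffects star) := ⟨fun _ => BD.Y, constY_mem star⟩

/-- The constant-`N` effect. -/
noncomputable def nEff : Eff (ReducedEffects star) := ⟨fun _ => BD.N, constN_mem star⟩

/-- The constant-`⊥` effect. -/
noncomputable def botEff : Eff (ReducedEffects star) := ⟨fun _ => BD.bot, constBot_mem star⟩

/-- The upper-set effect as an element of the effect space. -/
noncomputable def uEff (σ : S) : Eff (ReducedEffects star) := ⟨Uef σ, Uef_mem star σ⟩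

/-- A map on the effect space preserving pointwise infima of nonempty families. -/
def PreservesGLBs (ψ : Eff (ReducedEffects star) → BD) : Prop :=
  ∀ G : Set (Eff (ReducedEffects star)), G.Nonempty → ∀ g : Eff (ReducedEffects star),
    (∀ σ : S, IsGLB ((fun b : Eff (ReducedEffects star) => b.1 σ) '' G) (g.1 σ)) →
    IsGLB (ψ '' G) (ψ g)

variable {star}

lemma psi_mono {ψ : Eff (ReducedEffects star) → BD} (hK1 : PreservesGLBs star ψ)
    {b c : Eff (ReducedEffects star)} (h : ∀ η, b.1 η ≤ c.1 η) : ψ b ≤ ψ c := by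
  have hglb : ∀ σ : S, IsGLB ((fun x : Eff (ReducedEffects star) => x.1 σ) '' {b, c}) (b.1 σ) := by
    intro σ
    rw [Set.image_pair]
    constructor
    · rintro z (rfl | rfl)
      · exact le_refl _
      · exact h σ
    · intro w hw; exact hw (Or.inl rfl)
  have := hK1 {b, c} ⟨b, Or.inl rfl⟩ b hglb
  exact this.1 ⟨c, Or.inr rfl, rfl⟩

lemma psi_pair {ψ : Eff (ReducedEffects star) → BD} (hK1 : PreservesGLBs star ψ)
    {b c g : Eff (ReducedEffects star)} (h : ∀ η, g.1 η = b.1 η ⊓ c.1 η) :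
    IsGLB {ψ b, ψ c} (ψ g) := by
  have hglb : ∀ σ : S, IsGLB ((fun x : Eff (ReducedEffects star) => x.1 σ) '' {b, c}) (g.1 σ) := by
    intro σ
    rw [Set.image_pair, h σ]
    exact isGLB_pair_inf _ _
  have := hK1 {b, c} ⟨b, Or.inl rfl⟩ g hglb
  rwa [Set.image_pair] at this

lemma botEff_eq_inf_yn (σ : S) :
    (botEff star).1 σ = (yEff star).1 σ ⊓ (nEff star).1 σ := rfl

lemma psi_botEff {ψ : Eff (ReducedEffects star) → BD} (hK1 : PreservesGLBs star ψ)
    (hNob : ψ (nEff star) = BD.bot) : ψ (botEff star) = BD.bot := by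
  have h := psi_mono hK1 (b := botEff star) (c := nEff star) (fun η => bd_bot_le _)
  rw [hNob] at h
  rcases h with h | h
  · exact h
  · exact h

/-- The variant representation lemma: a `{Y, ⊥}`-valued inf-preserving functional on
the reduced effect space which is `Y` at the unit and `⊥` at the constant-`N` effect
is represented by a state, as far as the value `Y` is concerned. -/
lemma variant_rep (hdc : DownComplete S) {ψ : Eff (ReducedEffects star) → BD}
    (hK1 : PreservesGLBs star ψ)
    (hY : ψ (yEff star) = BD.Y)
    (hNob : ψ (nEff star) = BD.bot)
    (hnoN : ∀ b, ψ b ≠ BD.N) :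
    ∃ τ : S, ∀ b : Eff (ReducedEffects star), (ψ b = BD.Y ↔ b.1 τ = BD.Y) := by
  classical
  set D : Set S := {σ : S | ψ (uEff star σ) = BD.Y} with hD
  have hbotD : (⊥ : S) ∈ D := by
    have : uEff star (⊥ : S) = yEff star := by
      apply Subtype.ext
      funext η
      show Uef ⊥ η = BD.Y
      exact Uef_eq_Y_iff.2 bot_le
    show ψ (uEff star ⊥) = BD.Y
    rw [this, hY]
  have hDne : D.Nonempty := ⟨⊥, hbotD⟩
  have hGne : ((fun σ => uEff star σ) '' D).Nonempty := hDne.image _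
  -- pointwise GLB values of the family of upper-set effects over D
  have hptY : ∀ η : S, (∀ σ ∈ D, σ ≤ η) →
      IsGLB ((fun b : Eff (ReducedEffects star) => b.1 η) '' ((fun σ => uEff star σ) '' D)) BD.Y := by
    intro η hη
    rw [Set.image_image]
    rw [isGLB_bd_iff (hDne.image _)]
    refine Or.inl ⟨rfl, ?_⟩
    rintro x ⟨σ, hσ, rfl⟩
    exact Uef_eq_Y_iff.2 (hη σ hσ)
  have hptbot : ∀ η : S, (∃ σ ∈ D, ¬ σ ≤ η) →
      IsGLB ((fun b : Eff (ReducedEffects star) => b.1 η) '' ((fun σ => uEff star σ) '' D)) BD.bot := by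
    intro η ⟨σ₀, hσ₀, hle⟩
    rw [Set.image_image]
    rw [isGLB_bd_iff (hDne.image _)]
    refine Or.inr (Or.inr ⟨rfl, ?_, ?_⟩)
    · refine ⟨Uef σ₀ η, ⟨σ₀, hσ₀, rfl⟩, ?_⟩
      intro hc
      exact hle (Uef_eq_Y_iff.1 hc)
    · exact ⟨Uef σ₀ η, ⟨σ₀, hσ₀, rfl⟩, Uef_ne_N _ _⟩
  have hUBne : (upperBounds D).Nonempty := by
    by_contra hc
    rw [Set.not_nonempty_iff_eq_empty] at hc
    have hpt : ∀ η : S, IsGLB ((fun b : Eff (ReducedEffects star) => b.1 η) ''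
        ((fun σ => uEff star σ) '' D)) ((botEff star).1 η) := by
      intro η
      apply hptbot
      by_contra hc2
      push_neg at hc2
      have : η ∈ upperBounds D := fun σ hσ => hc2 σ hσ
      rw [hc] at this
      exact this
    have hglb := hK1 _ hGne (botEff star) hpt
    have hbotv : ψ (botEff star) = BD.bot := psi_botEff hK1 hNob
    rw [hbotv] at hglb
    have : BD.Y ≤ BD.bot := by
      apply hglb.2
      rintro x ⟨y, ⟨σ, hσ, rfl⟩, rfl⟩
      have : ψ (uEff star σ) = BD.Y := hσ
      rw [this]
    rcases this with h | h <;> simp_all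
  obtain ⟨τ, hτglb⟩ := hdc (upperBounds D) hUBne
  have hDleτ : ∀ σ ∈ D, σ ≤ τ := by
    intro σ hσ
    exact hτglb.2 (fun η hη => hη hσ)
  have hτUB : τ ∈ upperBounds D := hDleτ
  -- ψ (uEff τ) = Y, i.e. τ ∈ D
  have hτD : τ ∈ D := by
    have hpt : ∀ η : S, IsGLB ((fun b : Eff (ReducedEffects star) => b.1 η) ''
        ((fun σ => uEff star σ) '' D)) ((uEff star τ).1 η) := by
      intro η
      by_cases h : τ ≤ η
      · have : (uEff star τ).1 η = BD.Y := Uef_eq_Y_iff.2 h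
        rw [this]
        exact hptY η (fun σ hσ => le_trans (hDleτ σ hσ) h)
      · have hex : ∃ σ ∈ D, ¬ σ ≤ η := by
          by_contra hc2
          push_neg at hc2
          exact h (hτglb.1 (fun σ hσ => hc2 σ hσ))
        have : (uEff star τ).1 η = BD.bot := by
          show Uef τ η = BD.bot
          unfold Uef; simp [h]
        rw [this]
        exact hptbot η hex
    have hglb := hK1 _ hGne (uEff star τ) hpt
    have : BD.Y ≤ ψ (uEff star τ) := by
      apply hglb.2
      rintro x ⟨y, ⟨σ, hσ, rfl⟩, rfl⟩
      have : ψ (uEff star σ) = BD.Y := hσ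
      rw [this]
    exact eq_Y_of_Y_le this
  refine ⟨τ, fun b => ⟨?_, ?_⟩⟩
  · -- ψ b = Y → b.1 τ = Y
    intro hψb
    -- form the meet b ⊓ uEff τ
    set b' : S → BD := fun η => b.1 η ⊓ Uef τ η with hb'
    have hb'p : PreservesInf b' := inf_preservesInf b.2.1 (Uef_preservesInf τ)
    have hb'nN : ∀ η, b' η ≠ BD.N := by
      intro η hc
      exact Uef_ne_N τ η (inf_eq_N.1 hc).2
    have hb'mem : b' ∈ ReducedEffects star := mem_of_ne_N star hb'p hb'nN
    set be : Eff (ReducedEffects star) := ⟨b', hb'mem⟩ with hbe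
    have hψb' : ψ be = BD.Y := by
      have hglb := psi_pair hK1 (b := b) (c := uEff star τ) (g := be) (fun η => rfl)
      rw [hψb, hτD] at hglb
      have : BD.Y ≤ ψ be := by
        apply hglb.2
        rintro x (rfl | rfl) <;> rfl
      exact eq_Y_of_Y_le this
    set S' : Set S := {η : S | b' η = BD.Y} with hS'
    have hS'ne : S'.Nonempty := by
      by_contra hc
      rw [Set.not_nonempty_iff_eq_empty] at hc
      have hbb : be = botEff star := by
        apply Subtype.ext
        funext η
        show b' η = BD.bot
        cases hv : b' η with
        | bot => rfl
        | Y =>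
          exfalso
          have hmem : η ∈ S' := hv
          rw [hc] at hmem
          exact hmem
        | N => exact absurd hv (hb'nN η)
      rw [hbb, psi_botEff hK1 hNob] at hψb'
      exact absurd hψb' (by simp)
    obtain ⟨s, hsglb⟩ := hdc S' hS'ne
    have hbs : b' s = BD.Y := (pInf_eq_Y_iff hb'p hS'ne hsglb).2 (fun t ht => ht)
    have hτs : τ ≤ s := by
      apply hsglb.2
      intro η hη
      have : Uef τ η = BD.Y := (inf_eq_Y.1 hη).2
      exact Uef_eq_Y_iff.1 this
    have hbeu : be = uEff star s := by
      apply Subtype.ext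
      funext η
      show b' η = Uef s η
      by_cases h : s ≤ η
      · have h1 : b' η = BD.Y := by
          have := preservesInf_mono hb'p h
          rw [hbs] at this
          exact eq_Y_of_Y_le this
        rw [h1, Uef_eq_Y_iff.2 h]
      · have h2 : Uef s η = BD.bot := by unfold Uef; simp [h]
        rw [h2]
        cases hv : b' η with
        | bot => rfl
        | Y => exact absurd (hsglb.1 hv) h
        | N => exact absurd hv (hb'nN η)
    have hsD : s ∈ D := by
      show ψ (uEff star s) = BD.Y
      rw [← hbeu]; exact hψb'
    have : s ≤ τ := hDleτ s hsD
    have hsτ : s = τ := le_antisymm this hτs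
    have : τ ∈ S' := by rw [← hsτ]; exact hbs
    have := (inf_eq_Y.1 this).1
    exact this
  · -- b.1 τ = Y → ψ b = Y
    intro hbτ
    have hmono : ∀ η, (uEff star τ).1 η ≤ b.1 η := by
      intro η
      show Uef τ η ≤ b.1 η
      by_cases h : τ ≤ η
      · rw [Uef_eq_Y_iff.2 h]
        have := preservesInf_mono b.2.1 h
        rw [hbτ] at this
        rw [eq_Y_of_Y_le this]
      · unfold Uef; simp [h]; exact bd_bot_le _
    have := psi_mono hK1 hmono
    rw [hτD] at this
    exact eq_Y_of_Y_le this

end Variant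

section KeyLemmas

variable {S : Type*} [SemilatticeInf S] [OrderBot S] {star : S → S}

/-- The involution of an effect. -/
noncomputable def barEff (hoS : IsOrtho star) (b : Eff (ReducedEffects star)) :
    Eff (ReducedEffects star) :=
  ⟨fun σ => BD.inv (b.1 σ), inv_mem star hoS b.2⟩

lemma barEff_apply (hoS : IsOrtho star) (b : Eff (ReducedEffects star)) (σ : S) :
    (barEff hoS b).1 σ = BD.inv (b.1 σ) := rfl

lemma barEff_barEff (hoS : IsOrtho star) (b : Eff (ReducedEffects star)) :
    barEff hoS (barEff hoS b) = b := by
  apply Subtype.ext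
  funext σ
  exact inv_inv (b.1 σ)

lemma barEff_yEff (hoS : IsOrtho star) : barEff hoS (yEff star) = nEff star := by
  apply Subtype.ext; funext σ; rfl

lemma barEff_nEff (hoS : IsOrtho star) : barEff hoS (nEff star) = yEff star := by
  apply Subtype.ext; funext σ; rfl

lemma isGLB_inv_image {T : Set BD} (hT : T.Nonempty) {v : BD} (h : IsGLB T v) :
    IsGLB (BD.inv '' T) (BD.inv v) := by
  rw [isGLB_bd_iff hT] at h
  rw [isGLB_bd_iff (hT.image _)]
  rcases h with ⟨hv, hall⟩ | ⟨hv, hall⟩ | ⟨hv, ⟨x, hx, hx'⟩, ⟨x', hx2, hx2'⟩⟩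
  · refine Or.inr (Or.inl ⟨by rw [hv]; rfl, ?_⟩)
    rintro y ⟨x, hx, rfl⟩
    rw [hall x hx]; rfl
  · refine Or.inl ⟨by rw [hv]; rfl, ?_⟩
    rintro y ⟨x, hx, rfl⟩
    rw [hall x hx]; rfl
  · refine Or.inr (Or.inr ⟨by rw [hv]; rfl, ?_, ?_⟩)
    · exact ⟨BD.inv x', ⟨x', hx2, rfl⟩, fun hc => hx2' (inv_eq_Y.1 hc)⟩
    · exact ⟨BD.inv x, ⟨x, hx, rfl⟩, fun hc => hx' (inv_eq_N.1 hc)⟩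

/-- Sharp representation: a sharp inf-preserving functional is evaluation at a state. -/
lemma sharp_rep (hdc : DownComplete S) (hoS : IsOrtho star)
    {ψ : Eff (ReducedEffects star) → BD}
    (hK1 : PreservesGLBs star ψ)
    (hY : ψ (yEff star) = BD.Y)
    (hN : ψ (nEff star) = BD.N)
    (hK3 : ∀ b, (ψ b = BD.Y ∧ ψ (barEff hoS b) = BD.N) ∨
      (ψ b = BD.N ∧ ψ (barEff hoS b) = BD.Y) ∨
      (ψ b = BD.bot ∧ ψ (barEff hoS b) = BD.bot)) :
    ∃ τ : S, ∀ b : Eff (ReducedEffects star), ψ b = b.1 τ := by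
  classical
  set χ : Eff (ReducedEffects star) → BD := fun b => if ψ b = BD.Y then BD.Y else BD.bot with hχ
  have hχY : ∀ b, (χ b = BD.Y ↔ ψ b = BD.Y) := by
    intro b
    by_cases h : ψ b = BD.Y <;> simp [hχ, h]
  have hχK1 : PreservesGLBs star χ := by
    intro G hGne g hpt
    have hg := hK1 G hGne g hpt
    rw [isGLB_bd_iff (hGne.image ψ)] at hg
    rw [isGLB_bd_iff (hGne.image χ)]
    by_cases h : ψ g = BD.Y
    · refine Or.inl ⟨(hχY g).2 h, ?_⟩
      rintro x ⟨b, hb, rfl⟩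
      rcases hg with ⟨_, hall⟩ | ⟨hv, _⟩ | ⟨hv, _⟩
      · exact (hχY b).2 (hall (ψ b) ⟨b, hb, rfl⟩)
      · rw [h] at hv; exact absurd hv (by simp)
      · rw [h] at hv; exact absurd hv (by simp)
    · refine Or.inr (Or.inr ⟨by simp [hχ, h], ?_, ?_⟩)
      · have : ∃ b ∈ G, ψ b ≠ BD.Y := by
          by_contra hc
          push_neg at hc
          rcases hg with ⟨hv, _⟩ | ⟨hv, hall⟩ | ⟨hv, ⟨x, ⟨b, hb, rfl⟩, hx'⟩, _⟩
          · exact h hv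
          · obtain ⟨b, hb⟩ := hGne
            have := hall (ψ b) ⟨b, hb, rfl⟩
            rw [hc b hb] at this
            exact absurd this (by simp)
          · exact hx' (hc b hb)
        obtain ⟨b, hb, hb'⟩ := this
        exact ⟨χ b, ⟨b, hb, rfl⟩, by simp [hχ, hb']⟩
      · obtain ⟨b, hb⟩ := hGne
        refine ⟨χ b, ⟨b, hb, rfl⟩, ?_⟩
        by_cases h2 : ψ b = BD.Y <;> simp [hχ, h2]
  have hχnN : ∀ b, χ b ≠ BD.N := by
    intro b
    by_cases h : ψ b = BD.Y <;> simp [hχ, h]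
  have hχyE : χ (yEff star) = BD.Y := (hχY _).2 hY
  have hχnE : χ (nEff star) = BD.bot := by
    simp only [hχ, hN]
    simp
  obtain ⟨τ, hτ⟩ := variant_rep hdc hχK1 hχyE hχnE hχnN
  have hYiff : ∀ b : Eff (ReducedEffects star), ψ b = BD.Y ↔ b.1 τ = BD.Y := by
    intro b
    rw [← hχY b]
    exact hτ b
  have hNiff : ∀ b : Eff (ReducedEffects star), ψ b = BD.N ↔ b.1 τ = BD.N := by
    intro b
    constructor
    · intro h
      have hbar : ψ (barEff hoS b) = BD.Y := by
        rcases hK3 b with ⟨h1, _⟩ | ⟨_, h2⟩ | ⟨h1, _⟩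
        · rw [h] at h1; exact absurd h1 (by simp)
        · exact h2
        · rw [h] at h1; exact absurd h1 (by simp)
      have := (hYiff _).1 hbar
      rw [barEff_apply] at this
      exact inv_eq_Y.1 this
    · intro h
      have hbar : (barEff hoS b).1 τ = BD.Y := by
        rw [barEff_apply, h]; rfl
      have hbarY := (hYiff _).2 hbar
      rcases hK3 b with ⟨_, h2⟩ | ⟨h1, _⟩ | ⟨_, h2⟩
      · rw [hbarY] at h2; exact absurd h2 (by simp)
      · exact h1
      · rw [hbarY] at h2; exact absurd h2 (by simp)
  refine ⟨τ, fun b => ?_⟩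
  cases hv : b.1 τ with
  | Y => exact (hYiff b).2 hv
  | N => exact (hNiff b).2 hv
  | bot =>
    cases hw : ψ b with
    | bot => rfl
    | Y => rw [(hYiff b).1 hw] at hv; exact absurd hv (by simp)
    | N => rw [(hNiff b).1 hw] at hv; exact absurd hv (by simp)

/-- Subnormalized representation: a never-`Y`, inf-preserving functional which is `⊥`
at the unit is represented by a state as far as the value `N` is concerned. -/
lemma subnorm_rep (hdc : DownComplete S) (hoS : IsOrtho star)
    {ψ : Eff (ReducedEffects star) → BD}
    (hK1 : PreservesGLBs star ψ)
    (hYb : ψ (yEff star) = BD.bot)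
    (hN : ψ (nEff star) = BD.N)
    (hnoY : ∀ b, ψ b ≠ BD.Y) :
    ∃ τ : S, ∀ b : Eff (ReducedEffects star), (ψ b = BD.N ↔ b.1 τ = BD.N) := by
  classical
  set χ : Eff (ReducedEffects star) → BD := fun b => BD.inv (ψ (barEff hoS b)) with hχ
  have hχK1 : PreservesGLBs star χ := by
    intro G hGne g hpt
    set barG : Set (Eff (ReducedEffects star)) := barEff hoS '' G with hbarG
    have hbarGne : barG.Nonempty := hGne.image _
    have hptbar : ∀ σ : S, IsGLB ((fun b : Eff (ReducedEffects star) => b.1 σ) '' barG)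
        ((barEff hoS g).1 σ) := by
      intro σ
      have h1 : ((fun b : Eff (ReducedEffects star) => b.1 σ) '' barG)
          = BD.inv '' ((fun b : Eff (ReducedEffects star) => b.1 σ) '' G) := by
        rw [hbarG, Set.image_image, Set.image_image]
        rfl
      rw [h1, barEff_apply]
      exact isGLB_inv_image (hGne.image _) (hpt σ)
    have hglb := hK1 barG hbarGne (barEff hoS g) hptbar
    have h2 : χ '' G = BD.inv '' (ψ '' barG) := by
      ext x
      simp only [hχ, hbarG, Set.mem_image]
      constructor
      · rintro ⟨b, hb, rfl⟩
        exact ⟨ψ (barEff hoS b), ⟨barEff hoS b, ⟨b, hb, rfl⟩, rfl⟩, rfl⟩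
      · rintro ⟨y, ⟨c, ⟨b, hb, rfl⟩, rfl⟩, rfl⟩
        exact ⟨b, hb, rfl⟩
    rw [h2]
    exact isGLB_inv_image (hbarGne.image _) hglb
  have hχyE : χ (yEff star) = BD.Y := by
    show BD.inv (ψ (barEff hoS (yEff star))) = BD.Y
    rw [barEff_yEff, hN]; rfl
  have hχnE : χ (nEff star) = BD.bot := by
    show BD.inv (ψ (barEff hoS (nEff star))) = BD.bot
    rw [barEff_nEff, hYb]; rfl
  have hχnN : ∀ b, χ b ≠ BD.N := by
    intro b hc
    exact hnoY (barEff hoS b) (inv_eq_N.1 hc)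
  obtain ⟨τ, hτ⟩ := variant_rep hdc hχK1 hχyE hχnE hχnN
  refine ⟨τ, fun b => ?_⟩
  have key := hτ (barEff hoS b)
  have e1 : χ (barEff hoS b) = BD.inv (ψ b) := by
    show BD.inv (ψ (barEff hoS (barEff hoS b))) = BD.inv (ψ b)
    rw [barEff_barEff]
  rw [e1, barEff_apply] at key
  constructor
  · intro h
    have h2 := key.1 (by rw [h]; rfl)
    exact inv_eq_Y.1 h2
  · intro h
    have h2 := key.2 (by rw [h]; rfl)
    exact inv_eq_Y.1 h2

end KeyLemmas

section SimplexSide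

variable {S : Type*} [SemilatticeInf S] [OrderBot S]

/-- The set of pure states above a given state. -/
def PS (σ : S) : Set S := {α : S | PureState α ∧ σ ≤ α}

lemma PS_nonempty (hpd : PureDescription S) (σ : S) : (PS σ).Nonempty := (hpd.2 σ).1

lemma PS_isGLB (hpd : PureDescription S) (σ : S) : IsGLB (PS σ) σ := (hpd.2 σ).2

lemma PS_mono {σ η : S} (h : σ ≤ η) : PS η ⊆ PS σ :=
  fun α hα => ⟨hα.1, le_trans h hα.2⟩

lemma le_of_PS_lowerBound (hpd : PureDescription S) {σ w : S}
    (h : ∀ α ∈ PS σ, w ≤ α) : w ≤ σ :=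
  (PS_isGLB hpd σ).2 h

lemma PS_unique (hpd : PureDescription S) (hsx : Simplex S) {σ : S} {U : Set S}
    (hUne : U.Nonempty) (hUpure : ∀ α ∈ U, PureState α) (hUglb : IsGLB U σ) :
    U = PS σ := by
  obtain ⟨U', _, hU'uniq⟩ := hsx σ
  have h1 : U = U' := hU'uniq U ⟨hUne, hUpure, hUglb⟩
  have h2 : PS σ = U' := hU'uniq (PS σ)
    ⟨PS_nonempty hpd σ, fun α hα => hα.1, PS_isGLB hpd σ⟩
  rw [h1, h2]

lemma pure_isMax (hpd : PureDescription S) {α : S} (hα : PureState α) : IsMax α := by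
  have := hpd.1
  rw [Set.ext_iff] at this
  exact (this α).1 hα

lemma PS_pure (hpd : PureDescription S) {α : S} (hα : PureState α) : PS α = {α} := by
  ext β
  simp only [PS, Set.mem_setOf_eq, Set.mem_singleton_iff]
  constructor
  · rintro ⟨hβ, hle⟩
    exact le_antisymm (pure_isMax hpd hα hle) hle
  · intro h
    subst h
    exact ⟨hα, le_refl _⟩

lemma PS_union (hpd : PureDescription S) (hsx : Simplex S) {T : Set S} (hT : T.Nonempty)
    {g : S} (hg : IsGLB T g) : PS g = {α : S | ∃ t ∈ T, α ∈ PS t} := by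
  symm
  apply PS_unique hpd hsx
  · obtain ⟨t, ht⟩ := hT
    obtain ⟨α, hα⟩ := PS_nonempty hpd t
    exact ⟨α, t, ht, hα⟩
  · rintro α ⟨t, ht, hα⟩
    exact hα.1
  · constructor
    · rintro α ⟨t, ht, hα⟩
      exact le_trans (hg.1 ht) hα.2
    · intro w hw
      apply hg.2
      intro t ht
      apply le_of_PS_lowerBound hpd
      intro α hα
      exact hw ⟨t, ht, hα⟩

/-- For `σ ≠ ⊥`, the pure states above `σ*` are exactly the pure states not above `σ`. -/
lemma PS_star (hpd : PureDescription S) (hsx : Simplex S) (hdc : DownComplete S)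
    {star : S → S} (hoS : IsOrtho star) {σ : S} (hσ : σ ≠ ⊥) {α : S}
    (hα : PureState α) : α ∈ PS (star σ) ↔ α ∉ PS σ := by
  constructor
  · intro h1 h2
    exact (hoS.bowtie σ hσ).1 ⟨α, h2.2, h1.2⟩
  · intro h1
    by_contra h2
    -- form the glb of PS (star σ) ∪ {α}
    set S' : Set S := PS (star σ) ∪ {α} with hS'
    have hS'ne : S'.Nonempty := ⟨α, Or.inr rfl⟩
    obtain ⟨σ'', hσ''⟩ := hdc S' hS'ne
    have hS'pure : ∀ β ∈ S', PureState β := by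
      rintro β (hβ | rfl)
      · exact hβ.1
      · exact hα
    have hPSσ'' : S' = PS σ'' := PS_unique hpd hsx hS'ne hS'pure hσ''
    have hlt : σ'' < star σ := by
      have hle : σ'' ≤ star σ := by
        apply le_of_PS_lowerBound hpd
        intro β hβ
        exact hσ''.1 (Or.inl hβ)
      refine lt_of_le_of_ne hle ?_
      rintro rfl
      apply h2
      rw [← hPSσ'']
      exact Or.inr rfl
    obtain ⟨η, hησ, hησ''⟩ := (hoS.bowtie σ hσ).2.1 σ'' hlt
    obtain ⟨β, hβ⟩ := PS_nonempty hpd η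
    have hβσ : β ∈ PS σ := ⟨hβ.1, le_trans hησ hβ.2⟩
    have hβσ'' : β ∈ PS σ'' := ⟨hβ.1, le_trans hησ'' hβ.2⟩
    rw [← hPSσ''] at hβσ''
    rcases hβσ'' with hβstar | hβα
    · exact (hoS.bowtie σ hσ).1 ⟨β, hβσ.2, hβstar.2⟩
    · rw [Set.mem_singleton_iff] at hβα
      subst hβα
      exact h1 hβσ

open Classical in
/-- The effect associated with an arbitrary function on pure states. -/
noncomputable def Af (f : S → BD) : S → BD := fun σ =>
  if ∀ α ∈ PS σ, f α = BD.Y then BD.Y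
  else if ∀ α ∈ PS σ, f α = BD.N then BD.N
  else BD.bot

lemma Af_eq_Y_iff (hpd : PureDescription S) {f : S → BD} {σ : S} :
    Af f σ = BD.Y ↔ ∀ α ∈ PS σ, f α = BD.Y := by
  unfold Af
  by_cases h1 : ∀ α ∈ PS σ, f α = BD.Y
  · rw [if_pos h1]; exact ⟨fun _ => h1, fun _ => rfl⟩
  · rw [if_neg h1]
    constructor
    · intro h
      by_cases h2 : ∀ α ∈ PS σ, f α = BD.N
      · rw [if_pos h2] at h; exact absurd h (by simp)
      · rw [if_neg h2] at h; exact absurd h (by simp)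
    · intro h; exact absurd h h1

lemma Af_eq_N_iff (hpd : PureDescription S) {f : S → BD} {σ : S} :
    Af f σ = BD.N ↔ ∀ α ∈ PS σ, f α = BD.N := by
  unfold Af
  by_cases h1 : ∀ α ∈ PS σ, f α = BD.Y
  · rw [if_pos h1]
    constructor
    · intro h; exact absurd h (by simp)
    · intro h2
      obtain ⟨α, hα⟩ := PS_nonempty hpd σ
      have hy := h1 α hα
      rw [h2 α hα] at hy
      exact absurd hy (by simp)
  · rw [if_neg h1]
    by_cases h2 : ∀ α ∈ PS σ, f α = BD.N
    · rw [if_pos h2]; exact ⟨fun _ => h2, fun _ => rfl⟩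
    · rw [if_neg h2]
      exact ⟨fun h => absurd h (by simp), fun h => absurd h h2⟩

lemma Af_preservesInf (hpd : PureDescription S) (hsx : Simplex S) (f : S → BD) :
    PreservesInf (Af f) := by
  intro T hT g hg
  have hun := PS_union hpd hsx hT hg
  rw [isGLB_bd_iff (hT.image _)]
  rcases hv : Af f g with _ | _ | _
  · refine Or.inr (Or.inr ⟨rfl, ?_, ?_⟩)
    · by_contra hc
      push_neg at hc
      have : Af f g = BD.Y := by
        rw [Af_eq_Y_iff hpd, hun]
        rintro α ⟨t, ht, hα⟩
        exact (Af_eq_Y_iff hpd).1 (hc _ ⟨t, ht, rfl⟩) α hα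
      rw [hv] at this; exact absurd this (by simp)
    · by_contra hc
      push_neg at hc
      have : Af f g = BD.N := by
        rw [Af_eq_N_iff hpd, hun]
        rintro α ⟨t, ht, hα⟩
        exact (Af_eq_N_iff hpd).1 (hc _ ⟨t, ht, rfl⟩) α hα
      rw [hv] at this; exact absurd this (by simp)
  · refine Or.inl ⟨rfl, ?_⟩
    rintro x ⟨t, ht, rfl⟩
    rw [Af_eq_Y_iff hpd]
    intro α hα
    exact (Af_eq_Y_iff hpd).1 hv α (by rw [hun]; exact ⟨t, ht, hα⟩)
  · refine Or.inr (Or.inl ⟨rfl, ?_⟩)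
    rintro x ⟨t, ht, rfl⟩
    rw [Af_eq_N_iff hpd]
    intro α hα
    exact (Af_eq_N_iff hpd).1 hv α (by rw [hun]; exact ⟨t, ht, hα⟩)

lemma Af_mem (hpd : PureDescription S) (hsx : Simplex S) (hdc : DownComplete S)
    {star : S → S} (hoS : IsOrtho star) (f : S → BD) :
    Af f ∈ ReducedEffects star := by
  refine ⟨Af_preservesInf hpd hsx f, fun σ₀ σ₁ hY hN => ?_⟩
  have hmemY : ∀ η : S, Af f η = BD.Y ↔ σ₀ ≤ η := by
    intro η
    rw [Set.ext_iff] at hY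
    exact hY η
  have hmemN : ∀ η : S, Af f η = BD.N ↔ σ₁ ≤ η := by
    intro η
    rw [Set.ext_iff] at hN
    exact hN η
  have hσ₁N : Af f σ₁ = BD.N := (hmemN σ₁).2 (le_refl _)
  have hσ₀ : σ₀ ≠ ⊥ := by
    rintro rfl
    have := (hmemY σ₁).2 bot_le
    rw [hσ₁N] at this
    exact absurd this (by simp)
  have hsub : PS σ₁ ⊆ PS (star σ₀) := by
    intro α hα
    have hαN : Af f α = BD.N := (hmemN α).2 hα.2
    refine ⟨hα.1, ?_⟩
    have : α ∈ PS (star σ₀) := by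
      rw [PS_star hpd hsx hdc hoS hσ₀ hα.1]
      intro hmem
      have : Af f α = BD.Y := (hmemY α).2 hmem.2
      rw [hαN] at this
      exact absurd this (by simp)
    exact this.2
  apply le_of_PS_lowerBound hpd
  intro α hα
  exact (hsub hα).2

end SimplexSide

section Main

variable {SA SB : Type*} [SemilatticeInf SA] [OrderBot SA] [SemilatticeInf SB] [OrderBot SB]

lemma reg_subset_min
    (hdcA : DownComplete SA) (hdcB : DownComplete SB)
    (hpdA : PureDescription SA) (hpdB : PureDescription SB)
    {starA : SA → SA} {starB : SB → SB}
    (hoA : IsOrtho starA) (hoB : IsOrtho starB)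
    (hsxA : Simplex SA) :
    RegTensor (ReducedEffects starA) (ReducedEffects starB) ⊆
      MinTensor (ReducedEffects starA) (ReducedEffects starB) := by
  classical
  intro Φ hΦ
  obtain ⟨hmax, hc1, hc2, hc3, hc4, hc5, hc6⟩ := hΦ
  obtain ⟨hM1, hM2, hM3, hM4, hM5⟩ := hmax
  set yA := yEff starA with hyAdef
  set nA := nEff starA with hnAdef
  set yB := yEff starB with hyBdef
  set nB := nEff starB with hnBdef
  have hyAc : ∀ σ : SA, yA.1 σ = BD.Y := fun _ => rfl
  have hnAc : ∀ σ : SA, nA.1 σ = BD.N := fun _ => rfl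
  have hyBc : ∀ τ : SB, yB.1 τ = BD.Y := fun _ => rfl
  have hnBc : ∀ τ : SB, nB.1 τ = BD.N := fun _ => rfl
  have rowGLB : ∀ b, PreservesGLBs starA (fun a => Φ a b) :=
    fun b G hG g hpt => hM1 G hG g hpt b
  have colGLB : ∀ a, PreservesGLBs starB (fun b => Φ a b) :=
    fun a G hG g hpt => hM2 G hG g hpt a
  have hΦyy : Φ yA yB = BD.Y := hM5 yA yB hyAc hyBc
  have hnArow : ∀ b, Φ nA b = BD.N := fun b => hc2 nA b hnAc
  have hnBcol : ∀ a, Φ a nB = BD.N := fun a => hc1 a nB hnBc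
  -- if the B-marginal is N, the whole column is N
  have hG2a : ∀ b, Φ yA b = BD.N → ∀ a', Φ a' b = BD.N := by
    intro b hyb a'
    have hbot : Φ (botEff starA) b = BD.N := by
      have hp := psi_pair (rowGLB b) (b := yA) (c := nA) (g := botEff starA)
        (fun η => Y_inf_N.symm)
      refine eq_N_of_N_le (hp.2 ?_)
      rintro x (rfl | rfl)
      · rw [hyb]
      · rw [hnArow b]
    have hp := psi_pair (rowGLB b) (b := a') (c := barEff hoA a') (g := botEff starA)
      (fun η => (inf_self_inv _).symm)
    rw [hbot] at hp
    exact eq_N_of_N_le (hp.1 (Or.inl rfl))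
  -- if the A-marginal is N, the whole row is N
  have hG2b : ∀ a, Φ a yB = BD.N → ∀ b', Φ a b' = BD.N := by
    intro a hay b'
    have hbot : Φ a (botEff starB) = BD.N := by
      have hp := psi_pair (colGLB a) (b := yB) (c := nB) (g := botEff starB)
        (fun η => Y_inf_N.symm)
      refine eq_N_of_N_le (hp.2 ?_)
      rintro x (rfl | rfl)
      · rw [hay]
      · rw [hnBcol a]
    have hp := psi_pair (colGLB a) (b := b') (c := barEff hoB b') (g := botEff starB)
      (fun η => (inf_self_inv _).symm)
    rw [hbot] at hp
    exact eq_N_of_N_le (hp.1 (Or.inl rfl))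
  -- rows with ⊥ marginal never take the value Y
  have hrow_noY : ∀ a, Φ a yB = BD.bot → ∀ b, Φ a b ≠ BD.Y := by
    intro a ha b
    have h := hc5 a yB hyBc ha b (barEff hoB b) (fun τ => inf_self_inv _)
    rcases h with ⟨h1, _⟩ | ⟨h1, _⟩ | ⟨h1, _⟩ <;> rw [h1] <;> simp
  -- columns with ⊥ marginal never take the value Y
  have hcol_noY : ∀ b, Φ yA b = BD.bot → ∀ a, Φ a b ≠ BD.Y := by
    intro b hb a
    have h := hc6 b yA hyAc hb a (barEff hoA a) (fun σ => inf_self_inv _)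
    rcases h with ⟨h1, _⟩ | ⟨h1, _⟩ | ⟨h1, _⟩ <;> rw [h1] <;> simp
  -- the A-marginal is an evaluation at a state `sA`
  obtain ⟨sA, hsA⟩ : ∃ sA : SA, ∀ a, Φ a yB = a.1 sA := by
    apply sharp_rep hdcA hoA (ψ := fun a => Φ a yB) (rowGLB yB) hΦyy (hnArow yB)
    intro a
    exact hc4 yB yA hyAc hΦyy a (barEff hoA a) (fun σ => rfl)
  -- the inverted column of the unit
  have hbarcolY : ∀ b, Φ yA (barEff hoB b) = BD.inv (Φ yA b) :=
    fun b => hM4 b (barEff hoB b) yA (fun τ => rfl) hyAc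
  -- the point effects
  set lA : SA → Eff (ReducedEffects starA) := fun ω =>
    ⟨Af (fun α => if α = ω then BD.Y else BD.N),
      Af_mem hpdA hsxA hdcA hoA _⟩ with hlAdef
  have hlA_N : ∀ ω σ, ((lA ω).1 σ = BD.N ↔ ω ∉ PS σ) := by
    intro ω σ
    show Af _ σ = BD.N ↔ ω ∉ PS σ
    rw [Af_eq_N_iff hpdA]
    constructor
    · intro h hmem
      have := h ω hmem
      rw [if_pos rfl] at this
      exact absurd this (by simp)
    · intro h α hα
      rw [if_neg ?_]
      rintro rfl
      exact h hα
  -- sharp representation of Y-marginal columns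
  have hcolrep : ∀ b, Φ yA b = BD.Y → ∃ sb : SA, ∀ a', Φ a' b = a'.1 sb := by
    intro b hb
    apply sharp_rep hdcA hoA (ψ := fun a => Φ a b) (rowGLB b) hb (hnArow b)
    intro a'
    exact hc4 b yA hyAc hb a' (barEff hoA a') (fun σ => rfl)
  -- subnormalized representation of ⊥-marginal columns
  have hcolsub : ∀ b, Φ yA b = BD.bot →
      ∃ sb : SA, ∀ a', (Φ a' b = BD.N ↔ a'.1 sb = BD.N) := by
    intro b hb
    exact subnorm_rep hdcA hoA (ψ := fun a => Φ a b) (rowGLB b) hb (hnArow b) (hcol_noY b hb)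
  -- any column state lies below `sA` in the pure-set sense
  have hPSsub : ∀ (b : Eff (ReducedEffects starB)) (sb : SA),
      (∀ a', (Φ a' b = BD.N ↔ a'.1 sb = BD.N)) → PS sb ⊆ PS sA := by
    intro b sb hiff α hα
    by_contra hnot
    have h1 : (lA α).1 sA = BD.N := (hlA_N α sA).2 hnot
    have h2 : Φ (lA α) yB = BD.N := by rw [hsA (lA α), h1]
    have h3 : Φ (lA α) b = BD.N := hG2b (lA α) h2 b
    have h4 : (lA α).1 sb = BD.N := (hiff (lA α)).1 h3
    exact (hlA_N α sb).1 h4 hα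
  -- conditional states on the B side
  have hcond : ∀ ω, ω ∈ PS sA →
      ∃ τ : SB, ∀ b, (Φ (lA ω) b = BD.N ↔ b.1 τ = BD.N) := by
    intro ω hω
    have hmargin : Φ (lA ω) yB = (lA ω).1 sA := hsA (lA ω)
    have hne : (lA ω).1 sA ≠ BD.N := fun hc => (hlA_N ω sA).1 hc hω
    rcases hv : (lA ω).1 sA with _ | _ | _
    · -- ⊥ marginal : subnormalized representation of the row
      have hb : Φ (lA ω) yB = BD.bot := by rw [hmargin, hv]
      have hnoY := hrow_noY (lA ω) hb
      exact subnorm_rep hdcB hoB (ψ := fun b => Φ (lA ω) b) (colGLB (lA ω)) hb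
        (hnBcol (lA ω)) hnoY
    · -- Y marginal : sharp representation of the row
      have hb : Φ (lA ω) yB = BD.Y := by rw [hmargin, hv]
      have hrep : ∃ τ : SB, ∀ b, Φ (lA ω) b = b.1 τ := by
        apply sharp_rep hdcB hoB (ψ := fun b => Φ (lA ω) b) (colGLB (lA ω)) hb
          (hnBcol (lA ω))
        intro b
        exact hc3 (lA ω) yB hyBc hb b (barEff hoB b) (fun τ => rfl)
      obtain ⟨τ, hτ⟩ := hrep
      exact ⟨τ, fun b => by rw [hτ b]⟩
    · exact absurd hv hne
  choose τf hτf using hcond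
  refine ⟨{p | ∃ ω, ∃ h : ω ∈ PS sA, p = (ω, τf ω h)}, ?_, ?_⟩
  · obtain ⟨ω₀, hω₀⟩ := PS_nonempty hpdA sA
    exact ⟨(ω₀, τf ω₀ hω₀), ω₀, hω₀, rfl⟩
  intro a b
  have himne : ((fun p : SA × SB => pureT (ReducedEffects starA) (ReducedEffects starB)
      p.1 p.2 a b) '' {p | ∃ ω, ∃ h : ω ∈ PS sA, p = (ω, τf ω h)}).Nonempty := by
    obtain ⟨ω₀, hω₀⟩ := PS_nonempty hpdA sA
    exact ⟨_, ⟨(ω₀, τf ω₀ hω₀), ⟨ω₀, hω₀, rfl⟩, rfl⟩⟩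
  rw [isGLB_bd_iff himne]
  rcases hv : Φ a b with _ | _ | _
  · -- Φ a b = ⊥ : produce witnesses against Y and against N
    refine Or.inr (Or.inr ⟨rfl, ?_, ?_⟩)
    · -- some pure tensor value is not Y
      by_contra hc
      push_neg at hc
      have hallY : ∀ ω (h : ω ∈ PS sA),
          a.1 ω = BD.Y ∧ b.1 (τf ω h) = BD.Y := by
        intro ω h
        have := hc _ ⟨(ω, τf ω h), ⟨ω, h, rfl⟩, rfl⟩
        exact prod_eq_Y.1 this
      rcases hmb : Φ yA b with _ | _ | _
      · -- Φ yA b = ⊥ : contradiction via the inverted column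
        have hbarb : Φ yA (barEff hoB b) = BD.bot := by
          rw [hbarcolY b, hmb]; rfl
        obtain ⟨s', hs'⟩ := hcolsub (barEff hoB b) hbarb
        have hsub := hPSsub (barEff hoB b) s' hs'
        obtain ⟨β, hβ⟩ := PS_nonempty hpdA s'
        have hβA : β ∈ PS sA := hsub hβ
        have h1 : (barEff hoB b).1 (τf β hβA) = BD.N := by
          rw [barEff_apply, (hallY β hβA).2]; rfl
        have h2 : Φ (lA β) (barEff hoB b) = BD.N := (hτf β hβA (barEff hoB b)).2 h1
        have h3 : (lA β).1 s' = BD.N := (hs' (lA β)).1 h2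
        exact (hlA_N β s').1 h3 hβ
      · -- Φ yA b = Y : the column is an evaluation, giving value Y, contradiction
        obtain ⟨sb, hsb⟩ := hcolrep b hmb
        have hiff : ∀ a', (Φ a' b = BD.N ↔ a'.1 sb = BD.N) :=
          fun a' => by rw [hsb a']
        have hsub := hPSsub b sb hiff
        have hY : a.1 sb = BD.Y := by
          rw [pInf_eq_Y_iff a.2.1 (PS_nonempty hpdA sb) (PS_isGLB hpdA sb)]
          intro α hα
          exact (hallY α (hsub hα)).1
        rw [hsb a, hY] at hv
        exact absurd hv (by simp)
      · -- Φ yA b = N : all conditionals are N, contradicting Y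
        obtain ⟨β, hβ⟩ := PS_nonempty hpdA sA
        have h1 : Φ (lA β) b = BD.N := hG2a b hmb (lA β)
        have h2 : b.1 (τf β hβ) = BD.N := (hτf β hβ b).1 h1
        rw [(hallY β hβ).2] at h2
        exact absurd h2 (by simp)
    · -- some pure tensor value is not N
      by_contra hc
      push_neg at hc
      have hallN : ∀ ω (h : ω ∈ PS sA),
          a.1 ω = BD.N ∨ b.1 (τf ω h) = BD.N := by
        intro ω h
        have := hc _ ⟨(ω, τf ω h), ⟨ω, h, rfl⟩, rfl⟩
        exact prod_eq_N.1 this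
      rcases hmb : Φ yA b with _ | _ | _
      · -- ⊥ marginal column
        obtain ⟨sb, hsb⟩ := hcolsub b hmb
        have hsub := hPSsub b sb hsb
        have haN : a.1 sb = BD.N := by
          rw [pInf_eq_N_iff a.2.1 (PS_nonempty hpdA sb) (PS_isGLB hpdA sb)]
          intro α hα
          rcases hallN α (hsub hα) with h | h
          · exact h
          · exfalso
            have h2 : Φ (lA α) b = BD.N := (hτf α (hsub hα) b).2 h
            have h3 : (lA α).1 sb = BD.N := (hsb (lA α)).1 h2
            exact (hlA_N α sb).1 h3 hα
        have := (hsb a).2 haN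
        rw [hv] at this
        exact absurd this (by simp)
      · -- Y marginal column
        obtain ⟨sb, hsb⟩ := hcolrep b hmb
        have hiff : ∀ a', (Φ a' b = BD.N ↔ a'.1 sb = BD.N) :=
          fun a' => by rw [hsb a']
        have hsub := hPSsub b sb hiff
        have haN : a.1 sb = BD.N := by
          rw [pInf_eq_N_iff a.2.1 (PS_nonempty hpdA sb) (PS_isGLB hpdA sb)]
          intro α hα
          rcases hallN α (hsub hα) with h | h
          · exact h
          · exfalso
            have h2 : Φ (lA α) b = BD.N := (hτf α (hsub hα) b).2 h
            have h3 : (lA α).1 sb = BD.N := (hiff (lA α)).1 h2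
            exact (hlA_N α sb).1 h3 hα
        have := (hiff a).2 haN
        rw [hv] at this
        exact absurd this (by simp)
      · -- N marginal column
        have := hG2a b hmb a
        rw [hv] at this
        exact absurd this (by simp)
  · -- Φ a b = Y : all pure tensor values are Y
    refine Or.inl ⟨rfl, ?_⟩
    rintro x ⟨p, ⟨ω, h, rfl⟩, rfl⟩
    show BD.prod (a.1 ω) (b.1 (τf ω h)) = BD.Y
    -- first, both marginals are Y
    have hay : Φ a yB = BD.Y := by
      rcases hma : Φ a yB with _ | _ | _
      · exact absurd hv (hrow_noY a hma b)
      · rfl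
      · have := hG2b a hma b
        rw [hv] at this
        exact absurd this (by simp)
    have hmb : Φ yA b = BD.Y := by
      rcases hmb' : Φ yA b with _ | _ | _
      · exact absurd hv (hcol_noY b hmb' a)
      · rfl
      · have := hG2a b hmb' a
        rw [hv] at this
        exact absurd this (by simp)
    rw [prod_eq_Y]
    constructor
    · -- a is Y at ω
      have h1 : a.1 sA = BD.Y := by rw [← hsA a]; exact hay
      have := preservesInf_mono a.2.1 h.2
      rw [h1] at this
      exact eq_Y_of_Y_le this
    · -- the conditional of b at ω is Y
      have hbarb : Φ yA (barEff hoB b) = BD.N := by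
        rw [hbarcolY b, hmb]; rfl
      have h2 : Φ (lA ω) (barEff hoB b) = BD.N := hG2a (barEff hoB b) hbarb (lA ω)
      have h3 : (barEff hoB b).1 (τf ω h) = BD.N := (hτf ω h (barEff hoB b)).1 h2
      rw [barEff_apply] at h3
      exact inv_eq_N.1 h3
  · -- Φ a b = N : all pure tensor values are N
    refine Or.inr (Or.inl ⟨rfl, ?_⟩)
    rintro x ⟨p, ⟨ω, h, rfl⟩, rfl⟩
    show BD.prod (a.1 ω) (b.1 (τf ω h)) = BD.N
    rw [prod_eq_N]
    rcases hmb : Φ yA b with _ | _ | _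
    · -- ⊥ marginal column
      obtain ⟨sb, hsb⟩ := hcolsub b hmb
      have haN : a.1 sb = BD.N := (hsb a).1 hv
      by_cases hω : ω ∈ PS sb
      · left
        have := preservesInf_mono a.2.1 hω.2
        rw [haN] at this
        exact eq_N_of_N_le this
      · right
        have h1 : (lA ω).1 sb = BD.N := (hlA_N ω sb).2 hω
        have h2 : Φ (lA ω) b = BD.N := (hsb (lA ω)).2 h1
        exact (hτf ω h b).1 h2
    · -- Y marginal column
      obtain ⟨sb, hsb⟩ := hcolrep b hmb
      have haN : a.1 sb = BD.N := by rw [← hsb a]; exact hv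
      by_cases hω : ω ∈ PS sb
      · left
        have := preservesInf_mono a.2.1 hω.2
        rw [haN] at this
        exact eq_N_of_N_le this
      · right
        have h1 : (lA ω).1 sb = BD.N := (hlA_N ω sb).2 hω
        have h2 : Φ (lA ω) b = BD.N := by rw [hsb (lA ω)]; exact h1
        exact (hτf ω h b).1 h2
    · -- N marginal column
      right
      have h2 : Φ (lA ω) b = BD.N := hG2a b hmb (lA ω)
      exact (hτf ω h b).1 h2

end Main

section MinReg

variable {SA SB : Type*} [SemilatticeInf SA] [OrderBot SA] [SemilatticeInf SB] [OrderBot SB]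

lemma min_subset_reg {starA : SA → SA} {starB : SB → SB} :
    MinTensor (ReducedEffects starA) (ReducedEffects starB) ⊆
      RegTensor (ReducedEffects starA) (ReducedEffects starB) := by
  intro Φ hΦ
  obtain ⟨U, hUne, hU⟩ := hΦ
  have hiY : ∀ a b, (Φ a b = BD.Y ↔
      ∀ p ∈ U, BD.prod (a.1 p.1) (b.1 p.2) = BD.Y) := by
    intro a b
    constructor
    · intro hv p hp
      exact allY_of_isGLB (hU a b) hv _ ⟨p, hp, rfl⟩
    · intro hall
      refine glb_eq_Y_of_all (hUne.image _) (hU a b) ?_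
      rintro x ⟨p, hp, rfl⟩
      exact hall p hp
  have hiN : ∀ a b, (Φ a b = BD.N ↔
      ∀ p ∈ U, BD.prod (a.1 p.1) (b.1 p.2) = BD.N) := by
    intro a b
    constructor
    · intro hv p hp
      exact allN_of_isGLB (hU a b) hv _ ⟨p, hp, rfl⟩
    · intro hall
      refine glb_eq_N_of_all (hUne.image _) (hU a b) ?_
      rintro x ⟨p, hp, rfl⟩
      exact hall p hp
  have hibot : ∀ a b, Φ a b ≠ BD.Y → Φ a b ≠ BD.N → Φ a b = BD.bot := by
    intro a b h1 h2
    cases h : Φ a b with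
    | bot => rfl
    | Y => exact absurd h h1
    | N => exact absurd h h2
  refine ⟨⟨?_, ?_, ?_, ?_, ?_⟩, ?_, ?_, ?_, ?_, ?_, ?_⟩
  · -- var-1 inf preservation
    intro F hF f hpt b
    rw [isGLB_bd_iff (hF.image _)]
    rcases hv : Φ f b with _ | _ | _
    · refine Or.inr (Or.inr ⟨rfl, ?_, ?_⟩)
      · by_contra hc
        push_neg at hc
        have hall : ∀ a ∈ F, Φ a b = BD.Y := fun a ha => hc _ ⟨a, ha, rfl⟩
        have : Φ f b = BD.Y := by
          rw [hiY]
          intro p hp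
          obtain ⟨a₀, ha₀⟩ := id hF
          have hb : b.1 p.2 = BD.Y := (prod_eq_Y.1 ((hiY a₀ b).1 (hall a₀ ha₀) p hp)).2
          have hf : f.1 p.1 = BD.Y := by
            refine glb_eq_Y_of_all (hF.image _) (hpt p.1) ?_
            rintro x ⟨a, ha, rfl⟩
            exact (prod_eq_Y.1 ((hiY a b).1 (hall a ha) p hp)).1
          rw [prod_eq_Y]
          exact ⟨hf, hb⟩
        rw [hv] at this; exact absurd this (by simp)
      · by_contra hc
        push_neg at hc
        have hall : ∀ a ∈ F, Φ a b = BD.N := fun a ha => hc _ ⟨a, ha, rfl⟩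
        have : Φ f b = BD.N := by
          rw [hiN]
          intro p hp
          rw [prod_eq_N]
          by_cases hb : b.1 p.2 = BD.N
          · exact Or.inr hb
          · left
            refine glb_eq_N_of_all (hF.image _) (hpt p.1) ?_
            rintro x ⟨a, ha, rfl⟩
            rcases prod_eq_N.1 ((hiN a b).1 (hall a ha) p hp) with h | h
            · exact h
            · exact absurd h hb
        rw [hv] at this; exact absurd this (by simp)
    · refine Or.inl ⟨rfl, ?_⟩
      rintro x ⟨a, ha, rfl⟩
      show Φ a b = BD.Y
      rw [hiY]
      intro p hp
      have h := (hiY f b).1 hv p hp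
      rw [prod_eq_Y] at h ⊢
      refine ⟨?_, h.2⟩
      exact allY_of_isGLB (hpt p.1) h.1 _ ⟨a, ha, rfl⟩
    · refine Or.inr (Or.inl ⟨rfl, ?_⟩)
      rintro x ⟨a, ha, rfl⟩
      show Φ a b = BD.N
      rw [hiN]
      intro p hp
      have h := (hiN f b).1 hv p hp
      rw [prod_eq_N] at h ⊢
      rcases h with h | h
      · exact Or.inl (allN_of_isGLB (hpt p.1) h _ ⟨a, ha, rfl⟩)
      · exact Or.inr h
  · -- var-2 inf preservation
    intro G hG g hpt a
    rw [isGLB_bd_iff (hG.image _)]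
    rcases hv : Φ a g with _ | _ | _
    · refine Or.inr (Or.inr ⟨rfl, ?_, ?_⟩)
      · by_contra hc
        push_neg at hc
        have hall : ∀ b ∈ G, Φ a b = BD.Y := fun b hb => hc _ ⟨b, hb, rfl⟩
        have : Φ a g = BD.Y := by
          rw [hiY]
          intro p hp
          obtain ⟨b₀, hb₀⟩ := id hG
          have ha : a.1 p.1 = BD.Y := (prod_eq_Y.1 ((hiY a b₀).1 (hall b₀ hb₀) p hp)).1
          have hg : g.1 p.2 = BD.Y := by
            refine glb_eq_Y_of_all (hG.image _) (hpt p.2) ?_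
            rintro x ⟨b, hb, rfl⟩
            exact (prod_eq_Y.1 ((hiY a b).1 (hall b hb) p hp)).2
          rw [prod_eq_Y]
          exact ⟨ha, hg⟩
        rw [hv] at this; exact absurd this (by simp)
      · by_contra hc
        push_neg at hc
        have hall : ∀ b ∈ G, Φ a b = BD.N := fun b hb => hc _ ⟨b, hb, rfl⟩
        have : Φ a g = BD.N := by
          rw [hiN]
          intro p hp
          rw [prod_eq_N]
          by_cases ha : a.1 p.1 = BD.N
          · exact Or.inl ha
          · right
            refine glb_eq_N_of_all (hG.image _) (hpt p.2) ?_
            rintro x ⟨b, hb, rfl⟩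
            rcases prod_eq_N.1 ((hiN a b).1 (hall b hb) p hp) with h | h
            · exact absurd h ha
            · exact h
        rw [hv] at this; exact absurd this (by simp)
    · refine Or.inl ⟨rfl, ?_⟩
      rintro x ⟨b, hb, rfl⟩
      show Φ a b = BD.Y
      rw [hiY]
      intro p hp
      have h := (hiY a g).1 hv p hp
      rw [prod_eq_Y] at h ⊢
      refine ⟨h.1, ?_⟩
      exact allY_of_isGLB (hpt p.2) h.2 _ ⟨b, hb, rfl⟩
    · refine Or.inr (Or.inl ⟨rfl, ?_⟩)
      rintro x ⟨b, hb, rfl⟩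
      show Φ a b = BD.N
      rw [hiN]
      intro p hp
      have h := (hiN a g).1 hv p hp
      rw [prod_eq_N] at h ⊢
      rcases h with h | h
      · exact Or.inl h
      · exact Or.inr (allN_of_isGLB (hpt p.2) h _ ⟨b, hb, rfl⟩)
  · -- involution against the unit, first variable
    intro a abar yB' hbar hyB'
    rcases hv : Φ a yB' with _ | _ | _
    · have h1 : Φ abar yB' = BD.bot := by
        refine hibot abar yB' ?_ ?_
        · intro hc
          have : Φ a yB' = BD.N := by
            rw [hiN]
            intro p hp
            have := (hiY abar yB').1 hc p hp
            rw [prod_eq_Y] at this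
            have h2 := this.1
            rw [hbar p.1] at h2
            rw [prod_eq_N]
            exact Or.inl (inv_eq_Y.1 h2)
          rw [hv] at this; exact absurd this (by simp)
        · intro hc
          have : Φ a yB' = BD.Y := by
            rw [hiY]
            intro p hp
            rcases prod_eq_N.1 ((hiN abar yB').1 hc p hp) with h | h
            · rw [hbar p.1] at h
              rw [prod_eq_Y, hyB' p.2]
              exact ⟨inv_eq_N.1 h, rfl⟩
            · rw [hyB' p.2] at h
              exact absurd h (by simp)
          rw [hv] at this; exact absurd this (by simp)
      rw [h1]; rfl
    · have h1 : Φ abar yB' = BD.N := by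
        rw [hiN]
        intro p hp
        have := (hiY a yB').1 hv p hp
        rw [prod_eq_Y] at this
        rw [prod_eq_N, hbar p.1, this.1]
        exact Or.inl rfl
      rw [h1]; rfl
    · have h1 : Φ abar yB' = BD.Y := by
        rw [hiY]
        intro p hp
        rcases prod_eq_N.1 ((hiN a yB').1 hv p hp) with h | h
        · rw [prod_eq_Y, hbar p.1, h, hyB' p.2]
          exact ⟨rfl, rfl⟩
        · rw [hyB' p.2] at h
          exact absurd h (by simp)
      rw [h1]; rfl
  · -- involution against the unit, second variable
    intro b bbar yA' hbar hyA'
    rcases hv : Φ yA' b with _ | _ | _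
    · have h1 : Φ yA' bbar = BD.bot := by
        refine hibot yA' bbar ?_ ?_
        · intro hc
          have : Φ yA' b = BD.N := by
            rw [hiN]
            intro p hp
            have := (hiY yA' bbar).1 hc p hp
            rw [prod_eq_Y] at this
            have h2 := this.2
            rw [hbar p.2] at h2
            rw [prod_eq_N]
            exact Or.inr (inv_eq_Y.1 h2)
          rw [hv] at this; exact absurd this (by simp)
        · intro hc
          have : Φ yA' b = BD.Y := by
            rw [hiY]
            intro p hp
            rcases prod_eq_N.1 ((hiN yA' bbar).1 hc p hp) with h | h
            · rw [hyA' p.1] at h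
              exact absurd h (by simp)
            · rw [hbar p.2] at h
              rw [prod_eq_Y, hyA' p.1]
              exact ⟨rfl, inv_eq_N.1 h⟩
          rw [hv] at this; exact absurd this (by simp)
      rw [h1]; rfl
    · have h1 : Φ yA' bbar = BD.N := by
        rw [hiN]
        intro p hp
        have := (hiY yA' b).1 hv p hp
        rw [prod_eq_Y] at this
        rw [prod_eq_N, hbar p.2, this.2]
        exact Or.inr rfl
      rw [h1]; rfl
    · have h1 : Φ yA' bbar = BD.Y := by
        rw [hiY]
        intro p hp
        rcases prod_eq_N.1 ((hiN yA' b).1 hv p hp) with h | h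
        · rw [hyA' p.1] at h
          exact absurd h (by simp)
        · rw [prod_eq_Y, hbar p.2, h, hyA' p.1]
          exact ⟨rfl, rfl⟩
      rw [h1]; rfl
  · -- value Y at the units
    intro yA' yB' hyA' hyB'
    rw [hiY]
    intro p hp
    rw [prod_eq_Y, hyA' p.1, hyB' p.2]
    exact ⟨rfl, rfl⟩
  · -- constant N in the second slot
    intro a nB' hnB'
    rw [hiN]
    intro p hp
    rw [prod_eq_N, hnB' p.2]
    exact Or.inr rfl
  · -- constant N in the first slot
    intro nA' b hnA'
    rw [hiN]
    intro p hp
    rw [prod_eq_N, hnA' p.1]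
    exact Or.inl rfl
  · -- sharpness of rows with Y marginal
    intro a yB' hyB' hay b bbar hbar
    have haY : ∀ p ∈ U, a.1 p.1 = BD.Y := by
      intro p hp
      have := (hiY a yB').1 hay p hp
      exact (prod_eq_Y.1 this).1
    rcases hv : Φ a b with _ | _ | _
    · refine Or.inr (Or.inr ⟨rfl, ?_⟩)
      refine hibot a bbar ?_ ?_
      · intro hc
        have : Φ a b = BD.N := by
          rw [hiN]
          intro p hp
          have := (hiY a bbar).1 hc p hp
          rw [prod_eq_Y] at this
          have h2 := this.2
          rw [hbar p.2] at h2
          rw [prod_eq_N]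
          exact Or.inr (inv_eq_Y.1 h2)
        rw [hv] at this; exact absurd this (by simp)
      · intro hc
        have : Φ a b = BD.Y := by
          rw [hiY]
          intro p hp
          rcases prod_eq_N.1 ((hiN a bbar).1 hc p hp) with h | h
          · rw [haY p hp] at h
            exact absurd h (by simp)
          · rw [hbar p.2] at h
            rw [prod_eq_Y, haY p hp]
            exact ⟨rfl, inv_eq_N.1 h⟩
        rw [hv] at this; exact absurd this (by simp)
    · refine Or.inl ⟨rfl, ?_⟩
      rw [hiN]
      intro p hp
      have := (hiY a b).1 hv p hp
      rw [prod_eq_Y] at this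
      rw [prod_eq_N, hbar p.2, this.2]
      exact Or.inr rfl
    · refine Or.inr (Or.inl ⟨rfl, ?_⟩)
      rw [hiY]
      intro p hp
      rcases prod_eq_N.1 ((hiN a b).1 hv p hp) with h | h
      · rw [haY p hp] at h
        exact absurd h (by simp)
      · rw [prod_eq_Y, haY p hp, hbar p.2, h]
        exact ⟨rfl, rfl⟩
  · -- sharpness of columns with Y marginal
    intro b yA' hyA' hby a abar hbar
    have hbY : ∀ p ∈ U, b.1 p.2 = BD.Y := by
      intro p hp
      have := (hiY yA' b).1 hby p hp
      exact (prod_eq_Y.1 this).2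
    rcases hv : Φ a b with _ | _ | _
    · refine Or.inr (Or.inr ⟨rfl, ?_⟩)
      refine hibot abar b ?_ ?_
      · intro hc
        have : Φ a b = BD.N := by
          rw [hiN]
          intro p hp
          have := (hiY abar b).1 hc p hp
          rw [prod_eq_Y] at this
          have h2 := this.1
          rw [hbar p.1] at h2
          rw [prod_eq_N]
          exact Or.inl (inv_eq_Y.1 h2)
        rw [hv] at this; exact absurd this (by simp)
      · intro hc
        have : Φ a b = BD.Y := by
          rw [hiY]
          intro p hp
          rcases prod_eq_N.1 ((hiN abar b).1 hc p hp) with h | h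
          · rw [hbar p.1] at h
            rw [prod_eq_Y, hbY p hp]
            exact ⟨inv_eq_N.1 h, rfl⟩
          · rw [hbY p hp] at h
            exact absurd h (by simp)
        rw [hv] at this; exact absurd this (by simp)
    · refine Or.inl ⟨rfl, ?_⟩
      rw [hiN]
      intro p hp
      have := (hiY a b).1 hv p hp
      rw [prod_eq_Y] at this
      rw [prod_eq_N, hbar p.1, this.1]
      exact Or.inl rfl
    · refine Or.inr (Or.inl ⟨rfl, ?_⟩)
      rw [hiY]
      intro p hp
      rcases prod_eq_N.1 ((hiN a b).1 hv p hp) with h | h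
      · rw [prod_eq_Y, hbar p.1, h, hbY p hp]
        exact ⟨rfl, rfl⟩
      · rw [hbY p hp] at h
        exact absurd h (by simp)
  · -- rows with ⊥ marginal
    intro a yB' hyB' hay b b' hmeet
    have hnotY : ∀ c : Eff (ReducedEffects starB), Φ a c ≠ BD.Y := by
      intro c hc
      have : Φ a yB' = BD.Y := by
        rw [hiY]
        intro p hp
        have := (hiY a c).1 hc p hp
        rw [prod_eq_Y] at this
        rw [prod_eq_Y, hyB' p.2]
        exact ⟨this.1, rfl⟩
      rw [hay] at this; exact absurd this (by simp)
    have hnotNN : ¬ (Φ a b = BD.N ∧ Φ a b' = BD.N) := by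
      rintro ⟨h1, h2⟩
      have hex : ∃ p ∈ U, a.1 p.1 ≠ BD.N := by
        by_contra hc
        push_neg at hc
        have : Φ a yB' = BD.N := by
          rw [hiN]
          intro p hp
          rw [prod_eq_N]
          exact Or.inl (hc p hp)
        rw [hay] at this; exact absurd this (by simp)
      obtain ⟨p, hp, hpa⟩ := hex
      have hb : b.1 p.2 = BD.N := by
        rcases prod_eq_N.1 ((hiN a b).1 h1 p hp) with h | h
        · exact absurd h hpa
        · exact h
      have hb' : b'.1 p.2 = BD.N := by
        rcases prod_eq_N.1 ((hiN a b').1 h2 p hp) with h | h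
        · exact absurd h hpa
        · exact h
      have := hmeet p.2
      rw [hb, hb'] at this
      rw [inf_eq_N.2 ⟨rfl, rfl⟩] at this
      exact absurd this (by simp)
    rcases hv1 : Φ a b with _ | _ | _
    · rcases hv2 : Φ a b' with _ | _ | _
      · exact Or.inr (Or.inr ⟨rfl, rfl⟩)
      · exact absurd hv2 (hnotY b')
      · exact Or.inl ⟨rfl, rfl⟩
    · exact absurd hv1 (hnotY b)
    · rcases hv2 : Φ a b' with _ | _ | _
      · exact Or.inr (Or.inl ⟨rfl, rfl⟩)
      · exact absurd hv2 (hnotY b')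
      · exact absurd ⟨hv1, hv2⟩ hnotNN
  · -- columns with ⊥ marginal
    intro b yA' hyA' hby a a' hmeet
    have hnotY : ∀ c : Eff (ReducedEffects starA), Φ c b ≠ BD.Y := by
      intro c hc
      have : Φ yA' b = BD.Y := by
        rw [hiY]
        intro p hp
        have := (hiY c b).1 hc p hp
        rw [prod_eq_Y] at this
        rw [prod_eq_Y, hyA' p.1]
        exact ⟨rfl, this.2⟩
      rw [hby] at this; exact absurd this (by simp)
    have hnotNN : ¬ (Φ a b = BD.N ∧ Φ a' b = BD.N) := by
      rintro ⟨h1, h2⟩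
      have hex : ∃ p ∈ U, b.1 p.2 ≠ BD.N := by
        by_contra hc
        push_neg at hc
        have : Φ yA' b = BD.N := by
          rw [hiN]
          intro p hp
          rw [prod_eq_N]
          exact Or.inr (hc p hp)
        rw [hby] at this; exact absurd this (by simp)
      obtain ⟨p, hp, hpb⟩ := hex
      have ha : a.1 p.1 = BD.N := by
        rcases prod_eq_N.1 ((hiN a b).1 h1 p hp) with h | h
        · exact h
        · exact absurd h hpb
      have ha' : a'.1 p.1 = BD.N := by
        rcases prod_eq_N.1 ((hiN a' b).1 h2 p hp) with h | h
        · exact h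
        · exact absurd h hpb
      have := hmeet p.1
      rw [ha, ha'] at this
      rw [inf_eq_N.2 ⟨rfl, rfl⟩] at this
      exact absurd this (by simp)
    rcases hv1 : Φ a b with _ | _ | _
    · rcases hv2 : Φ a' b with _ | _ | _
      · exact Or.inr (Or.inr ⟨rfl, rfl⟩)
      · exact absurd hv2 (hnotY a')
      · exact Or.inl ⟨rfl, rfl⟩
    · exact absurd hv1 (hnotY a)
    · rcases hv2 : Φ a' b with _ | _ | _
      · exact Or.inr (Or.inl ⟨rfl, rfl⟩)
      · exact absurd hv2 (hnotY a')
      · exact absurd ⟨hv1, hv2⟩ hnotNN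

end MinReg

section Flip

variable {SA SB : Type*} [SemilatticeInf SA] [OrderBot SA] [SemilatticeInf SB] [OrderBot SB]

lemma minTensor_flip_mp {EA : Set (SA → BD)} {EB : Set (SB → BD)}
    {Φ : Eff EA → Eff EB → BD} (h : Φ ∈ MinTensor EA EB) :
    (fun b a => Φ a b) ∈ MinTensor EB EA := by
  obtain ⟨U, hUne, hU⟩ := h
  refine ⟨Prod.swap '' U, hUne.image _, ?_⟩
  intro b a
  have him : ((fun q : SB × SA => pureT EB EA q.1 q.2 b a) '' (Prod.swap '' U)) =
      ((fun p : SA × SB => pureT EA EB p.1 p.2 a b) '' U) := by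
    rw [Set.image_image]
    apply Set.image_congr
    intro p _
    exact prod_comm _ _
  rw [him]
  exact hU a b

lemma regTensor_flip_mp {EA : Set (SA → BD)} {EB : Set (SB → BD)}
    {Φ : Eff EA → Eff EB → BD} (h : Φ ∈ RegTensor EA EB) :
    (fun b a => Φ a b) ∈ RegTensor EB EA := by
  obtain ⟨⟨hM1, hM2, hM3, hM4, hM5⟩, hc1, hc2, hc3, hc4, hc5, hc6⟩ := h
  refine ⟨⟨?_, ?_, ?_, ?_, ?_⟩, ?_, ?_, ?_, ?_, ?_, ?_⟩
  · exact fun F hF f hpt a => hM2 F hF f hpt a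
  · exact fun G hG g hpt b => hM1 G hG g hpt b
  · exact fun b bbar yA hbar hyA => hM4 b bbar yA hbar hyA
  · exact fun a abar yB hbar hyB => hM3 a abar yB hbar hyB
  · exact fun yB yA hyB hyA => hM5 yA yB hyA hyB
  · exact fun b nA hnA => hc2 nA b hnA
  · exact fun nB a hnB => hc1 a nB hnB
  · exact fun b yA hyA hby a abar habar => hc4 b yA hyA hby a abar habar
  · exact fun a yB hyB hay b bbar hbbar => hc3 a yB hyB hay b bbar hbbar
  · exact fun b yA hyA hby a a' hmeet => hc6 b yA hyA hby a a' hmeet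
  · exact fun a yB hyB hay b b' hmeet => hc5 a yB hyB hay b b' hmeet

end Flip

end TensorAux

/-- if one of two orthocomplemented spaces of states (with pure
descriptions, and with reduced effect spaces) is a simplex, then the regular tensor
product coincides with the minimal one. -/
theorem reg_eq_min_of_simplex {SA SB : Type*}
    [SemilatticeInf SA] [OrderBot SA] [SemilatticeInf SB] [OrderBot SB]
    (hdcA : DownComplete SA) (hdcB : DownComplete SB)
    (hpdA : PureDescription SA) (hpdB : PureDescription SB)
    (starA : SA → SA) (starB : SB → SB)
    (hoA : IsOrtho starA) (hoB : IsOrtho starB)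
    (hsimp : Simplex SA ∨ Simplex SB) :
    RegTensor (ReducedEffects starA) (ReducedEffects starB) =
      MinTensor (ReducedEffects starA) (ReducedEffects starB) := by
  rcases hsimp with hsx | hsx
  · apply Set.Subset.antisymm
    · exact TensorAux.reg_subset_min hdcA hdcB hpdA hpdB hoA hoB hsx
    · exact TensorAux.min_subset_reg
  · apply Set.Subset.antisymm
    · intro Φ hΦ
      have h1 : (fun b a => Φ a b) ∈
          RegTensor (ReducedEffects starB) (ReducedEffects starA) :=
        TensorAux.regTensor_flip_mp hΦ
      have h2 := TensorAux.reg_subset_min hdcB hdcA hpdB hpdA hoB hoA hsx h1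
      have h3 := TensorAux.minTensor_flip_mp h2
      exact h3
    · exact TensorAux.min_subset_reg
end
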